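/- arXiv:1606.06248 — 3 statements merged into one kernel-verified Lean document; each statement's English description precedes it below -/
import Mathlib

section
/- Let λ be a strict partition. For any probability distribution μ on J(P_λ^shift) and any box [i,j] ∈ P_λ^shift, E(μ; R^shift_{ij}) = 1 + Σ_{c ∈ C^shift_{ij}(λ)} P(ν ∼ μ; c ∈ ν), where the sum is over outward corners of λ occurring strictly southeast of the center of box [i,j] and P(ν ∼ μ; c ∈ ν) is the probability that a random order ideal drawn from μ contains the corner c. Equivalently, for every order ideal ν ∈ J(P_λ^shift), R^shift_{ij}(ν) equals 1 plus the number of outward corners in C^shift_{ij}(λ) contained in ν. -/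
open scoped Classical

noncomputable section

namespace CDEPaper

/-- The down-degree of `p`: the number of elements that `p` covers, as a real number. -/
def ddeg {α : Type*} [PartialOrder α] (p : α) : ℝ :=
  (Nat.card {q : α // q ⋖ p} : ℝ)

/-- The expectation of the statistic `f` with respect to the weights `μ`. -/
def expect {α : Type*} (μ : α → ℝ) (f : α → ℝ) : ℝ :=
  ∑ᶠ p, μ p * f p

/-- The uniform distribution on a finite type. -/
def uni (α : Type*) : α → ℝ :=
  fun _ => (Nat.card α : ℝ)⁻¹

/-- `μ` is a probability distribution. -/
def IsProbDist {α : Type*} (μ : α → ℝ) : Prop :=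
  (∀ x, 0 ≤ μ x) ∧ (∑ᶠ x, μ x) = 1

/-- The `k`-chain distribution: each `p` gets probability proportional to the number of
`k`-chains (strictly increasing sequences `c₀ < c₁ < ⋯ < c_k`) passing through `p`. -/
def chainDist (α : Type*) [PartialOrder α] (k : ℕ) : α → ℝ := fun p =>
  (Nat.card {c : Fin (k + 1) → α // StrictMono c ∧ ∃ i, c i = p} : ℝ) /
    (((k : ℝ) + 1) * (Nat.card {c : Fin (k + 1) → α // StrictMono c} : ℝ))

/-- The `m`-multichain distribution: each `p` gets probability proportional to the number of
`m`-multichains (weakly increasing sequences) passing through `p`. -/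
def mchainDist (α : Type*) [PartialOrder α] (m : ℕ) : α → ℝ := fun p =>
  (Nat.card {c : Fin (m + 1) → α // Monotone c ∧ ∃ i, c i = p} : ℝ) /
    (Nat.card {cq : (Fin (m + 1) → α) × α // Monotone cq.1 ∧ ∃ i, cq.1 i = cq.2} : ℝ)

/-- The modified `m`-multichain distribution: each `p` gets probability proportional to the
number of pairs `(c, i)` where `c` is an `m`-multichain and `c i = p`. -/
def mhatDist (α : Type*) [PartialOrder α] (m : ℕ) : α → ℝ := fun p =>
  (Nat.card {ci : (Fin (m + 1) → α) × Fin (m + 1) // Monotone ci.1 ∧ ci.1 ci.2 = p} : ℝ) /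
    (((m : ℝ) + 1) * (Nat.card {c : Fin (m + 1) → α // Monotone c} : ℝ))

/-- The maximal chain distribution: each `p` gets probability proportional to the number of
maximal chains passing through `p`. -/
def maxchainDist (α : Type*) [PartialOrder α] : α → ℝ := fun p =>
  (Nat.card {C : Set α // IsMaxChain (· ≤ ·) C ∧ p ∈ C} : ℝ) /
    (Nat.card {Cq : Set α × α // IsMaxChain (· ≤ ·) Cq.1 ∧ Cq.2 ∈ Cq.1} : ℝ)

/-- A poset has coincidental down-degree expectations (CDE). -/
def IsCDE (α : Type*) [PartialOrder α] : Prop :=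
  expect (maxchainDist α) ddeg = expect (uni α) ddeg

/-- A poset is mCDE: the expected down-degree with respect to the `k`-chain distribution agrees
with the uniform expected down-degree for every `k = 0, 1, …, r` (i.e. every `k` for which a
`k`-chain exists). -/
def IsMCDE (α : Type*) [PartialOrder α] : Prop :=
  ∀ k : ℕ, (∃ c : Fin (k + 1) → α, StrictMono c) →
    expect (chainDist α k) ddeg = expect (uni α) ddeg

/-- The distributive lattice `J(P)` of order ideals (lower sets) of a poset, ordered by
inclusion. -/
abbrev OIdeal (α : Type*) [PartialOrder α] : Type _ := {I : Set α // IsLowerSet I}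

/-- The indicator statistic that `p` can be toggled into the order ideal `I`. -/
def Tplus {α : Type*} [PartialOrder α] (p : α) (I : OIdeal α) : ℝ :=
  if p ∉ I.1 ∧ IsLowerSet (I.1 ∪ {p}) then 1 else 0

/-- The indicator statistic that `p` can be toggled out of the order ideal `I`. -/
def Tminus {α : Type*} [PartialOrder α] (p : α) (I : OIdeal α) : ℝ :=
  if p ∈ I.1 ∧ IsLowerSet (I.1 \ {p}) then 1 else 0

/-- A distribution on `J(P)` is toggle-symmetric if for every `p` the probability that `p` can
be toggled in equals the probability that `p` can be toggled out. -/
def ToggleSymmetric {α : Type*} [PartialOrder α] (μ : OIdeal α → ℝ) : Prop :=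
  ∀ p : α, expect μ (Tplus p) = expect μ (Tminus p)

/-- `J(P)` is toggle-CDE (tCDE): every toggle-symmetric probability distribution has the same
expected down-degree as the uniform distribution. -/
def IsTCDE (α : Type*) [PartialOrder α] : Prop :=
  ∀ μ : OIdeal α → ℝ, IsProbDist μ → ToggleSymmetric μ →
    expect μ ddeg = expect (uni (OIdeal α)) ddeg

end CDEPaper
namespace CDEPaper

/-! ### Skew shapes and shifted shapes -/

/-- The boxes of the skew shape `λ/ν` of height `a`, in matrix coordinates with 1-based rows
and columns: row `i` (for `1 ≤ i ≤ a`) consists of the boxes `[i,j]` with `ν i < j ≤ λ i`.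
The poset structure is the one induced from the componentwise (product) order on `ℕ × ℕ`. -/
def skewCells (a : ℕ) (lam nu : ℕ → ℕ) : Set (ℕ × ℕ) :=
  {b | 1 ≤ b.1 ∧ b.1 ≤ a ∧ nu b.1 < b.2 ∧ b.2 ≤ lam b.1}

/-- The boxes of the shifted Young diagram of a strict partition `λ` of length `l`:
the boxes `[i,j]` with `1 ≤ i ≤ l` and `i ≤ j ≤ λ i + i - 1`.  The poset structure is the one
induced from the componentwise (product) order on `ℕ × ℕ`. -/
def shiftCells (l : ℕ) (lam : ℕ → ℕ) : Set (ℕ × ℕ) :=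
  {b | 1 ≤ b.1 ∧ b.1 ≤ l ∧ b.1 ≤ b.2 ∧ b.2 < lam b.1 + b.1}

/-- The shifted rook statistic `R^shift_{ij}` on order ideals of (the poset of) `S`. -/
def Rshift (S : Set (ℕ × ℕ)) (i j : ℕ) (I : OIdeal ↥S) : ℝ :=
  (∑ᶠ (q : ↥S), if (q : ℕ × ℕ).1 ≤ i ∧ (q : ℕ × ℕ).2 ≤ j then Tplus q I else 0)
    + (∑ᶠ (q : ↥S), if i ≤ (q : ℕ × ℕ).1 ∧ j ≤ (q : ℕ × ℕ).2 then Tminus q I else 0)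
    - (∑ᶠ (q : ↥S),
        if (q : ℕ × ℕ).1 < i ∧ (q : ℕ × ℕ).2 < j ∧ (q : ℕ × ℕ).1 < (q : ℕ × ℕ).2 then
          Tminus q I else 0)
    - (∑ᶠ (q : ↥S),
        if i < (q : ℕ × ℕ).1 ∧ j < (q : ℕ × ℕ).2 ∧ (q : ℕ × ℕ).1 < (q : ℕ × ℕ).2 then
          Tplus q I else 0)

/-- The shifted diagram of `λ` (of length `l`) has an outward corner indexed by `i'`
(a north step followed by an east step on the southeast border, occurring at the lattice point
`(i', λ (i'+1) + i')`) if and only if `1 ≤ i' < l` and `λ i' ≥ λ (i'+1) + 2`. -/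
def IsCorner (l : ℕ) (lam : ℕ → ℕ) (i' : ℕ) : Prop :=
  1 ≤ i' ∧ i' + 1 ≤ l ∧ lam (i' + 1) + 2 ≤ lam i'

/-- An order ideal `I ∈ J(P_λ^shift)` contains the outward corner indexed by `i'`
(i.e. the lattice path of `I` contains both steps of the corner):  equivalently, `I` contains
both the last box `[i'+1, λ(i'+1)+i']` of row `i'+1` and the box `[i', λ(i'+1)+i'+1]`. -/
def ContainsCorner (l : ℕ) (lam : ℕ → ℕ) (I : OIdeal ↥(shiftCells l lam)) (i' : ℕ) : Prop :=
  (∃ q : ↥(shiftCells l lam), (q : ℕ × ℕ) = (i' + 1, lam (i' + 1) + i') ∧ q ∈ I.1) ∧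
  (∃ q : ↥(shiftCells l lam), (q : ℕ × ℕ) = (i', lam (i' + 1) + i' + 1) ∧ q ∈ I.1)

/-- A (not necessarily strict) partition `ν` (with parts `ν 1 ≥ ν 2 ≥ ⋯`) which, viewed as a
straight shape, is balanced with height and width both equal to `k`:  it has exactly `k`
nonzero parts, its first part is `k`, and every outward corner of its boundary path (which
occurs at the point `(i, ν (i+1))` whenever `ν i > ν (i+1)`) lies on the anti-diagonal
`i + j = k` of the `k × k` square. -/
def BalancedSquare (k : ℕ) (nu : ℕ → ℕ) : Prop :=
  (∀ i, 1 ≤ i → nu (i + 1) ≤ nu i) ∧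
  (∀ i, 1 ≤ i → i ≤ k → 1 ≤ nu i) ∧
  (∀ i, k < i → nu i = 0) ∧
  nu 1 = k ∧
  (∀ i, 1 ≤ i → i + 1 ≤ k → nu (i + 1) < nu i → i + nu (i + 1) = k)

/-- The poset `P_{a,1,1,d}`: a bottom chain `w₁ < ⋯ < w_a`, two incomparable elements `x, y`
covering `w_a`, and a top chain `z₁ < ⋯ < z_d` with `z₁` covering both `x` and `y`.
It is realized inside `ℕ × ℕ` (with the componentwise order) as
`w_i = (i,i)`, `x = (a+1, a)`, `y = (a, a+1)`, `z_j = (a+j, a+j)`. -/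
def Pa11d (a d : ℕ) : Set (ℕ × ℕ) :=
  {p | (1 ≤ p.1 ∧ p.1 ≤ a ∧ p.2 = p.1) ∨ p = (a + 1, a) ∨ p = (a, a + 1) ∨
    (∃ j, 1 ≤ j ∧ j ≤ d ∧ p = (a + j, a + j))}

/-! ### Shifted set-valued tableaux

Letters of the primed alphabet `1 < 1' < 2 < 2' < ⋯` are encoded as natural numbers:
the letter `m : ℕ` has value `m / 2 + 1` and is primed iff `m` is odd
(so `0 ↦ 1, 1 ↦ 1', 2 ↦ 2, 3 ↦ 2', …`); the order on letters is the usual order on `ℕ`. -/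

/-- The value of a letter. -/
def letterVal (m : ℕ) : ℕ := m / 2 + 1

/-- `T` is a shifted set-valued tableau of shape given by the box set `S`:  each box gets a
finite nonempty set of letters, all entries of a box weakly precede all entries of any strictly
larger box, each unprimed letter appears at most once in each column, and each primed letter
appears at most once in each row. -/
def IsSSVT (S : Set (ℕ × ℕ)) (T : ↥S → Finset ℕ) : Prop :=
  (∀ u, (T u).Nonempty) ∧
  (∀ u v : ↥S, u < v → ∀ x ∈ T u, ∀ y ∈ T v, x ≤ y) ∧
  (∀ u v : ↥S, u ≠ v → (u : ℕ × ℕ).2 = (v : ℕ × ℕ).2 →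
    ∀ m : ℕ, m % 2 = 0 → ¬(m ∈ T u ∧ m ∈ T v)) ∧
  (∀ u v : ↥S, u ≠ v → (u : ℕ × ℕ).1 = (v : ℕ × ℕ).1 →
    ∀ m : ℕ, m % 2 = 1 → ¬(m ∈ T u ∧ m ∈ T v))

/-- `T` is standard: distinct entry occurrences have distinct values, and the values used are
exactly `1, 2, …, N` where `N` is the total number of entries. -/
def IsStandardT (S : Set (ℕ × ℕ)) (T : ↥S → Finset ℕ) : Prop :=
  (∀ u v : ↥S, ∀ x ∈ T u, ∀ y ∈ T v, letterVal x = letterVal y → u = v ∧ x = y) ∧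
  (∀ m : ℕ, 1 ≤ m → m ≤ ∑ᶠ (u : ↥S), (T u).card → ∃ u : ↥S, ∃ x ∈ T u, letterVal x = m)

/-- `T` is barely set-valued: exactly one box has two entries; all other boxes have one. -/
def IsBarelySetValued (S : Set (ℕ × ℕ)) (T : ↥S → Finset ℕ) : Prop :=
  ∃ u₀ : ↥S, (T u₀).card = 2 ∧ ∀ u : ↥S, u ≠ u₀ → (T u).card = 1

/-- `T` is unprimed: no primed letters appear. -/
def IsUnprimed (S : Set (ℕ × ℕ)) (T : ↥S → Finset ℕ) : Prop :=
  ∀ u : ↥S, ∀ x ∈ T u, x % 2 = 0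

/-- `g^λ`: the number of unprimed standard shifted tableaux of shape `λ`. -/
def gShift (l : ℕ) (lam : ℕ → ℕ) : ℕ :=
  Nat.card {T : ↥(shiftCells l lam) → Finset ℕ //
    IsSSVT (shiftCells l lam) T ∧ IsStandardT (shiftCells l lam) T ∧
    (∀ u, (T u).card = 1) ∧ IsUnprimed (shiftCells l lam) T}

/-- The number of standard shifted barely set-valued tableaux of shape `λ`. -/
def numBarelySVT (l : ℕ) (lam : ℕ → ℕ) : ℕ :=
  Nat.card {T : ↥(shiftCells l lam) → Finset ℕ //
    IsSSVT (shiftCells l lam) T ∧ IsStandardT (shiftCells l lam) T ∧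
    IsBarelySetValued (shiftCells l lam) T}

/-! ### Toggles, rowmotion, orbits -/

/-- The toggle `τ_p` on order ideals. -/
def toggle {α : Type*} [PartialOrder α] (p : α) (I : OIdeal α) : OIdeal α :=
  if h : p ∉ I.1 ∧ IsLowerSet (I.1 ∪ {p}) then ⟨I.1 ∪ {p}, h.2⟩
  else if h' : p ∈ I.1 ∧ IsLowerSet (I.1 \ {p}) then ⟨I.1 \ {p}, h'.2⟩
  else I

/-- The composition of the toggles along a list, applied head first. -/
def applyToggles {α : Type*} [PartialOrder α] (L : List α) (I : OIdeal α) : OIdeal α :=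
  L.foldl (fun J p => toggle p J) I

/-- The forward orbit of `x` under `Φ` (for invertible `Φ` on a finite set, the orbit). -/
def orbit {β : Type*} (Φ : β → β) (x : β) : Set β := {y | ∃ n : ℕ, Φ^[n] x = y}

/-- The probability distribution that is uniform on the orbit of `x` under `Φ` and zero
outside of it. -/
def orbitDist {β : Type*} (Φ : β → β) (x : β) : β → ℝ := fun y =>
  if y ∈ orbit Φ x then (Nat.card ↥(orbit Φ x) : ℝ)⁻¹ else 0

/-- Rowmotion on order ideals: `I ↦ {x : x ≤ y for some minimal element y of P \ I}`. -/
def rowmotion {α : Type*} [PartialOrder α] (I : OIdeal α) : OIdeal α :=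
  ⟨{x | ∃ y, (y ∉ I.1 ∧ ∀ z, z ∉ I.1 → z ≤ y → z = y) ∧ x ≤ y}, by
    intro a b hba ha
    obtain ⟨y, hy, hay⟩ := ha
    exact ⟨y, hy, le_trans hba hay⟩⟩

/-- The antichain cardinality statistic `I ↦ #max(I)`. -/
def antichainCard {α : Type*} [PartialOrder α] (I : OIdeal α) : ℝ :=
  (Nat.card {p : α // p ∈ I.1 ∧ ∀ q, q ∈ I.1 → p ≤ q → p = q} : ℝ)

end CDEPaper

namespace CDEPaper

namespace St10

variable (l : ℕ) (lam : ℕ → ℕ)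

lemma mem_shift {r c : ℕ} :
    (r, c) ∈ shiftCells l lam ↔ 1 ≤ r ∧ r ≤ l ∧ r ≤ c ∧ c < lam r + r := Iff.rfl

lemma le_def (q q' : ↥(shiftCells l lam)) :
    q ≤ q' ↔ (q : ℕ × ℕ).1 ≤ (q' : ℕ × ℕ).1 ∧ (q : ℕ × ℕ).2 ≤ (q' : ℕ × ℕ).2 := by
  rw [← Subtype.coe_le_coe, Prod.le_def]

variable (I : OIdeal ↥(shiftCells l lam))

/-- membership of box `(r,c)` in the ideal `I`. -/
def memB (r c : ℕ) : Prop :=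
  ∃ q : ↥(shiftCells l lam), (q : ℕ × ℕ) = (r, c) ∧ q ∈ I.1

lemma memB_S {r c : ℕ} (h : memB l lam I r c) : (r, c) ∈ shiftCells l lam := by
  obtain ⟨q, hq, -⟩ := h; rw [← hq]; exact q.2

lemma memB_mono {r c r' c' : ℕ} (h : memB l lam I r c)
    (hS : (r', c') ∈ shiftCells l lam) (h1 : r' ≤ r) (h2 : c' ≤ c) :
    memB l lam I r' c' := by
  obtain ⟨q, hq, hqI⟩ := h
  refine ⟨⟨(r', c'), hS⟩, rfl, I.2 ?_ hqI⟩
  rw [le_def, hq]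
  exact ⟨h1, h2⟩

lemma nu_ex (r : ℕ) : ∃ n, ¬ memB l lam I r (r + n) := by
  refine ⟨lam r, fun h => ?_⟩
  have := memB_S l lam I h
  rw [mem_shift] at this
  omega

/-- The number of boxes of `I` in row `r`. -/
def nu (r : ℕ) : ℕ := Nat.find (nu_ex l lam I r)

lemma memB_iff {r c : ℕ} : memB l lam I r c ↔ r ≤ c ∧ c < r + nu l lam I r := by
  constructor
  · intro h
    have hS := memB_S l lam I h
    rw [mem_shift] at hS
    refine ⟨hS.2.2.1, ?_⟩
    by_contra hc
    push_neg at hc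
    have hS' : (r, r + nu l lam I r) ∈ shiftCells l lam := by
      rw [mem_shift]; omega
    exact Nat.find_spec (nu_ex l lam I r) (memB_mono l lam I h hS' le_rfl hc)
  · rintro ⟨h1, h2⟩
    have := Nat.find_min (nu_ex l lam I r) (show c - r < nu l lam I r by omega)
    rw [not_not] at this
    have hc : r + (c - r) = c := by omega
    rwa [hc] at this

lemma memB_val (q : ↥(shiftCells l lam)) :
    q ∈ I.1 ↔ memB l lam I (q : ℕ × ℕ).1 (q : ℕ × ℕ).2 := by
  constructor
  · intro h; exact ⟨q, by rw [Prod.mk.eta], h⟩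
  · rintro ⟨q', hq', hq'I⟩
    have : q' = q := Subtype.ext (by rw [hq', Prod.mk.eta])
    rwa [← this]

lemma nu_row {r : ℕ} (h : 1 ≤ nu l lam I r) :
    1 ≤ r ∧ r ≤ l ∧ nu l lam I r ≤ lam r := by
  have hm : memB l lam I r (r + nu l lam I r - 1) := by
    rw [memB_iff]; omega
  have := memB_S l lam I hm
  rw [mem_shift] at this
  omega

variable (hstrict : ∀ i, 1 ≤ i → i + 1 ≤ l → lam (i + 1) < lam i)

include hstrict in
lemma nu_strict {r : ℕ} (h1 : 1 ≤ r) (h : 1 ≤ nu l lam I (r + 1)) :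
    nu l lam I (r + 1) < nu l lam I r := by
  have hm : memB l lam I (r + 1) (r + nu l lam I (r + 1)) := by
    rw [memB_iff]; omega
  have hS := memB_S l lam I hm
  rw [mem_shift] at hS
  have hlam : lam (r + 1) < lam r := hstrict r h1 hS.2.1
  have hS' : (r, r + nu l lam I (r + 1)) ∈ shiftCells l lam := by
    rw [mem_shift]; omega
  have := (memB_iff l lam I).1 (memB_mono l lam I hm hS' (by omega) le_rfl)
  omega

include hstrict in
lemma nu_e_mono {r1 r2 : ℕ} (h1 : 1 ≤ r1) (h12 : r1 ≤ r2) (h : 1 ≤ nu l lam I r2) :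
    nu l lam I r2 + r2 ≤ nu l lam I r1 + r1 := by
  induction r2, h12 using Nat.le_induction with
  | base => omega
  | succ n hn ih =>
    have hs := nu_strict l lam I hstrict (by omega) h
    have := ih (by omega)
    omega

-- ### chunk 2
include hstrict in
lemma tplus_eq (q : ↥(shiftCells l lam)) :
    Tplus q I =
      if (q : ℕ × ℕ).2 = (q : ℕ × ℕ).1 + nu l lam I (q : ℕ × ℕ).1 ∧
          ((q : ℕ × ℕ).1 = 1 ∨
            nu l lam I (q : ℕ × ℕ).1 + 2 ≤ nu l lam I ((q : ℕ × ℕ).1 - 1)) then 1 else 0 := by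
  obtain ⟨⟨r, c⟩, hqS⟩ := q
  simp only [Tplus]
  have hS := hqS
  rw [mem_shift] at hS
  refine if_congr ?_ rfl rfl
  constructor
  · rintro ⟨hnot, hls⟩
    rw [memB_val] at hnot
    try simp only at hnot ⊢
    have hge : r + nu l lam I r ≤ c := by
      rw [memB_iff] at hnot; omega
    have hle : c ≤ r + nu l lam I r := by
      by_contra hc
      push_neg at hc
      have hS' : (r, c - 1) ∈ shiftCells l lam := by rw [mem_shift]; omega
      have hmem : (⟨(r, c - 1), hS'⟩ : ↥(shiftCells l lam)) ∈ I.1 ∪ {⟨(r, c), hqS⟩} := by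
        apply hls (a := ⟨(r, c), hqS⟩)
        · rw [Subtype.mk_le_mk, Prod.mk_le_mk]
          constructor <;> omega
        · exact Set.mem_union_right _ rfl
      rcases hmem with hmem | hmem
      · rw [memB_val] at hmem
        try simp only at hmem
        rw [memB_iff] at hmem
        omega
      · simp only [Set.mem_singleton_iff, Subtype.mk.injEq, Prod.mk.injEq] at hmem
        omega
    refine ⟨by omega, ?_⟩
    by_cases hr1 : r = 1
    · exact Or.inl hr1
    · right
      have hS' : (r - 1, c) ∈ shiftCells l lam := by
        have hlam : lam r < lam (r - 1) := by
          have h1 := hstrict (r - 1) (by omega) (by omega)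
          have h2 : r - 1 + 1 = r := by omega
          rw [h2] at h1
          exact h1
        rw [mem_shift]; omega
      have hmem : (⟨(r - 1, c), hS'⟩ : ↥(shiftCells l lam)) ∈ I.1 ∪ {⟨(r, c), hqS⟩} := by
        apply hls (a := ⟨(r, c), hqS⟩)
        · rw [Subtype.mk_le_mk, Prod.mk_le_mk]
          constructor <;> omega
        · exact Set.mem_union_right _ rfl
      rcases hmem with hmem | hmem
      · rw [memB_val] at hmem
        try simp only at hmem
        rw [memB_iff] at hmem
        omega
      · simp only [Set.mem_singleton_iff, Subtype.mk.injEq, Prod.mk.injEq] at hmem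
        omega
  · rintro ⟨hc, hup⟩
    try simp only at hc hup
    refine ⟨?_, ?_⟩
    · rw [memB_val]
      simp only
      rw [memB_iff]
      omega
    · rintro a b hba (haI | haq)
      · exact Set.mem_union_left _ (I.2 hba haI)
      · simp only [Set.mem_singleton_iff] at haq
        subst haq
        by_cases hbq : b = (⟨(r, c), hqS⟩ : ↥(shiftCells l lam))
        · exact Set.mem_union_right _ (by rw [hbq]; rfl)
        · left
          rw [le_def] at hba
          try simp only at hba
          have hbS := b.2
          rw [← Prod.mk.eta (p := (b : ℕ × ℕ)), mem_shift] at hbS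
          rcases Nat.lt_or_ge (b : ℕ × ℕ).1 r with hb1 | hb1
          · -- row strictly above
            have hr2 : 2 ≤ r := by omega
            have hnn : nu l lam I r + 2 ≤ nu l lam I (r - 1) := by
              rcases hup with h1 | h2
              · omega
              · exact h2
            have hm : memB l lam I (r - 1) c := by
              rw [memB_iff]; omega
            rw [memB_val]
            exact memB_mono l lam I hm
              (by rw [mem_shift]; exact hbS) (by omega) hba.2
          · -- same row
            have hb1' : (b : ℕ × ℕ).1 = r := by omega
            have hb2 : (b : ℕ × ℕ).2 < c := by
              rcases Nat.lt_or_ge (b : ℕ × ℕ).2 c with h | h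
              · exact h
              · exfalso
                apply hbq
                apply Subtype.ext
                rw [← Prod.mk.eta (p := (b : ℕ × ℕ)), hb1']
                have : (b : ℕ × ℕ).2 = c := by omega
                rw [this]
            rw [memB_val, memB_iff, hb1']
            omega

include hstrict in
lemma tminus_eq (q : ↥(shiftCells l lam)) :
    Tminus q I =
      if (q : ℕ × ℕ).2 + 1 = (q : ℕ × ℕ).1 + nu l lam I (q : ℕ × ℕ).1 ∧
          ((nu l lam I (q : ℕ × ℕ).1 = 1 ∧ nu l lam I ((q : ℕ × ℕ).1 + 1) = 0) ∨
            (2 ≤ nu l lam I (q : ℕ × ℕ).1 ∧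
              nu l lam I ((q : ℕ × ℕ).1 + 1) + 2 ≤ nu l lam I (q : ℕ × ℕ).1)) then 1 else 0 := by
  obtain ⟨⟨r, c⟩, hqS⟩ := q
  simp only [Tminus]
  have hS := hqS
  rw [mem_shift] at hS
  refine if_congr ?_ rfl rfl
  constructor
  · rintro ⟨hin, hls⟩
    rw [memB_val] at hin
    try simp only at hin ⊢
    have hin' := (memB_iff l lam I).1 hin
    -- helper: no strictly bigger box is in I
    have key : ∀ r' c', memB l lam I r' c' → r ≤ r' → c ≤ c' → (r, c) ≠ (r', c') → False := by
      rintro r' c' ⟨q', hq', hq'I⟩ h1 h2 hne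
      have hq'' : (⟨(r, c), hqS⟩ : ↥(shiftCells l lam)) ∈ I.1 \ {⟨(r, c), hqS⟩} := by
        apply hls (a := q')
        · rw [le_def, hq']
          exact ⟨h1, h2⟩
        · refine ⟨hq'I, ?_⟩
          simp only [Set.mem_singleton_iff]
          intro hq
          rw [hq] at hq'
          exact hne (by rw [← hq']; )
      exact hq''.2 rfl
    have hc1 : c + 1 = r + nu l lam I r := by
      by_contra hc
      have hm : memB l lam I r (c + 1) := by rw [memB_iff]; omega
      exact key r (c + 1) hm le_rfl (by omega) (by simp)
    refine ⟨hc1, ?_⟩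
    by_cases hn1 : nu l lam I r = 1
    · left
      refine ⟨hn1, ?_⟩
      by_contra h0
      have hm : memB l lam I (r + 1) (r + 1) := by rw [memB_iff]; omega
      exact key (r + 1) (r + 1) hm (by omega) (by omega) (by simp)
    · right
      refine ⟨by omega, ?_⟩
      by_contra h0
      have hm : memB l lam I (r + 1) c := by rw [memB_iff]; omega
      exact key (r + 1) c hm (by omega) le_rfl (by simp)
  · rintro ⟨hc, hcase⟩
    try simp only at hc hcase
    refine ⟨?_, ?_⟩
    · rw [memB_val]
      simp only
      rw [memB_iff]
      omega
    · rintro a b hba ⟨haI, hane⟩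
      simp only [Set.mem_singleton_iff] at hane
      refine ⟨I.2 hba haI, ?_⟩
      simp only [Set.mem_singleton_iff]
      intro hbq
      subst hbq
      apply hane
      rw [le_def] at hba
      try simp only at hba
      have haB := (memB_val l lam I a).1 haI
      have haB' := (memB_iff l lam I).1 haB
      apply Subtype.ext
      rw [← Prod.mk.eta (p := (a : ℕ × ℕ))]
      rcases Nat.lt_or_ge r (a : ℕ × ℕ).1 with h1 | h1
      · exfalso
        have he := nu_e_mono l lam I hstrict (r1 := r + 1) (r2 := (a : ℕ × ℕ).1)
          (by omega) (by omega) (by omega)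
        omega
      · have ha1 : (a : ℕ × ℕ).1 = r := by omega
        rw [ha1] at haB' ⊢
        have : (a : ℕ × ℕ).2 = c := by omega
        rw [this]
-- ### chunk 3

include hstrict in
lemma lamadd {r r' : ℕ} (h1 : 1 ≤ r) (h2 : r ≤ r') (h3 : r' ≤ l) :
    lam r' + r' ≤ lam r + r := by
  induction r', h2 using Nat.le_induction with
  | base => exact le_rfl
  | succ n hn ih =>
    have h4 := hstrict n (by omega) (by omega)
    have h5 := ih (by omega)
    omega

include hstrict in
lemma S_finite : (shiftCells l lam).Finite := by
  apply Set.Finite.subset (Set.finite_Icc ((1, 1) : ℕ × ℕ) (l, lam 1 + l))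
  rintro ⟨r, c⟩ hb
  rw [mem_shift] at hb
  rw [Set.mem_Icc, Prod.mk_le_mk, Prod.mk_le_mk]
  have := lamadd l lam hstrict (r := 1) (r' := r) le_rfl hb.1 hb.2.1
  omega

lemma rowsum [Fintype ↥(shiftCells l lam)] (r c : ℕ) (P : Prop) [Decidable P]
    (h : P → (r, c) ∈ shiftCells l lam) :
    ∑ q ∈ Finset.univ.filter (fun q : ↥(shiftCells l lam) => (q : ℕ × ℕ).1 = r),
      (if (q : ℕ × ℕ) = (r, c) ∧ P then (1 : ℝ) else 0) = if P then 1 else 0 := by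
  by_cases hP : P
  · rw [if_pos hP]
    rw [Finset.sum_eq_single (⟨(r, c), h hP⟩ : ↥(shiftCells l lam))]
    · rw [if_pos ⟨rfl, hP⟩]
    · intro q hq hne
      rw [if_neg]
      rintro ⟨h1, -⟩
      exact hne (Subtype.ext h1)
    · intro hq
      exfalso
      exact hq (by simp [Finset.mem_filter])
  · rw [if_neg hP]
    apply Finset.sum_eq_zero
    intro q _
    rw [if_neg]
    rintro ⟨-, hp⟩
    exact hP hp

variable (i j : ℕ)

/-- canonical row indicators -/
def indA (r : ℕ) : ℝ :=
  if r + nu l lam I r ≤ j ∧ (r = 1 ∨ nu l lam I r + 2 ≤ nu l lam I (r - 1)) then 1 else 0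

def indB (r : ℕ) : ℝ :=
  if j + 1 ≤ r + nu l lam I r ∧
      ((nu l lam I r = 1 ∧ nu l lam I (r + 1) = 0) ∨
        (2 ≤ nu l lam I r ∧ nu l lam I (r + 1) + 2 ≤ nu l lam I r)) then 1 else 0

def indC (r : ℕ) : ℝ :=
  if r + nu l lam I r ≤ j ∧ 2 ≤ nu l lam I r ∧
      nu l lam I (r + 1) + 2 ≤ nu l lam I r then 1 else 0

def indD (r : ℕ) : ℝ :=
  if j + 1 ≤ r + nu l lam I r ∧ 1 ≤ nu l lam I r ∧ nu l lam I r < lam r ∧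
      nu l lam I r + 2 ≤ nu l lam I (r - 1) then 1 else 0

def indK (r : ℕ) : ℝ :=
  if IsCorner l lam r ∧ i ≤ r ∧ j ≤ lam (r + 1) + r ∧ ContainsCorner l lam I r then 1 else 0

variable (hij : (i, j) ∈ shiftCells l lam)

include hstrict hij in
lemma sumA_eq [Fintype ↥(shiftCells l lam)] :
    (∑ᶠ q : ↥(shiftCells l lam),
        if (q : ℕ × ℕ).1 ≤ i ∧ (q : ℕ × ℕ).2 ≤ j then Tplus q I else 0) =
      ∑ r ∈ Finset.Icc 1 i, indA l lam I j r := by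
  have hijS := hij
  rw [mem_shift] at hijS
  classical
  rw [finsum_eq_sum_of_fintype]
  rw [← Finset.sum_fiberwise_of_maps_to
    (g := fun q : ↥(shiftCells l lam) => (q : ℕ × ℕ).1) (t := Finset.Icc 1 l)
    (fun q _ => by
      have hq := q.2
      rw [← Prod.mk.eta (p := (q : ℕ × ℕ)), mem_shift] at hq
      simp only [Finset.mem_Icc]
      omega)]
  have hrow : ∀ r ∈ Finset.Icc 1 l,
      (∑ q ∈ Finset.univ.filter (fun q : ↥(shiftCells l lam) => (q : ℕ × ℕ).1 = r),
        (if (q : ℕ × ℕ).1 ≤ i ∧ (q : ℕ × ℕ).2 ≤ j then Tplus q I else 0)) =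
      (if r ≤ i ∧ r + nu l lam I r ≤ j ∧
          (r = 1 ∨ nu l lam I r + 2 ≤ nu l lam I (r - 1)) then (1:ℝ) else 0) := by
    intro r hr
    rw [Finset.mem_Icc] at hr
    rw [← rowsum l lam (r := r) (c := r + nu l lam I r)
      (P := r ≤ i ∧ r + nu l lam I r ≤ j ∧
        (r = 1 ∨ nu l lam I r + 2 ≤ nu l lam I (r - 1)))
      (by
        intro hP
        have h5 := lamadd l lam hstrict (r := r) (r' := i) (by omega) (by omega) (by omega)
        rw [mem_shift]
        omega)]
    apply Finset.sum_congr rfl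
    intro q hq
    rw [Finset.mem_filter] at hq
    have hq1 := hq.2
    rw [tplus_eq l lam I hstrict q]
    obtain ⟨⟨q1, q2⟩, hqS⟩ := q
    have hbs := hqS
    rw [mem_shift] at hbs
    simp only at hq1 ⊢
    subst hq1
    simp only [Prod.mk.injEq, true_and]
    split_ifs <;> first | rfl | (exfalso; omega)
  refine Eq.trans (Finset.sum_congr rfl hrow) ?_
  rw [← Finset.sum_subset (Finset.Icc_subset_Icc_right (show i ≤ l by omega))
    (fun r hr hr' => by
      rw [Finset.mem_Icc] at hr
      rw [Finset.mem_Icc] at hr'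
      rw [if_neg]
      rintro ⟨h1, -⟩
      omega)]
  apply Finset.sum_congr rfl
  intro r hr
  rw [Finset.mem_Icc] at hr
  rw [indA]
  refine if_congr ?_ rfl rfl
  omega
include hstrict hij in
lemma sumB_eq [Fintype ↥(shiftCells l lam)] :
    (∑ᶠ q : ↥(shiftCells l lam),
        if i ≤ (q : ℕ × ℕ).1 ∧ j ≤ (q : ℕ × ℕ).2 then Tminus q I else 0) =
      ∑ r ∈ Finset.Icc i l, indB l lam I j r := by
  have hijS := hij
  rw [mem_shift] at hijS
  classical
  rw [finsum_eq_sum_of_fintype]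
  rw [← Finset.sum_fiberwise_of_maps_to
    (g := fun q : ↥(shiftCells l lam) => (q : ℕ × ℕ).1) (t := Finset.Icc 1 l)
    (fun q _ => by
      have hq := q.2
      rw [← Prod.mk.eta (p := (q : ℕ × ℕ)), mem_shift] at hq
      simp only [Finset.mem_Icc]
      omega)]
  have hrow : ∀ r ∈ Finset.Icc 1 l,
      (∑ q ∈ Finset.univ.filter (fun q : ↥(shiftCells l lam) => (q : ℕ × ℕ).1 = r),
        (if i ≤ (q : ℕ × ℕ).1 ∧ j ≤ (q : ℕ × ℕ).2 then Tminus q I else 0)) =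
      (if i ≤ r ∧ j + 1 ≤ r + nu l lam I r ∧
          ((nu l lam I r = 1 ∧ nu l lam I (r + 1) = 0) ∨
            (2 ≤ nu l lam I r ∧ nu l lam I (r + 1) + 2 ≤ nu l lam I r)) then (1:ℝ) else 0) := by
    intro r hr
    rw [Finset.mem_Icc] at hr
    rw [← rowsum l lam (r := r) (c := r + nu l lam I r - 1)
      (P := i ≤ r ∧ j + 1 ≤ r + nu l lam I r ∧
        ((nu l lam I r = 1 ∧ nu l lam I (r + 1) = 0) ∨
          (2 ≤ nu l lam I r ∧ nu l lam I (r + 1) + 2 ≤ nu l lam I r)))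
      (by
        intro hP
        exact memB_S l lam I ((memB_iff l lam I).2 (by omega)))]
    apply Finset.sum_congr rfl
    intro q hq
    rw [Finset.mem_filter] at hq
    have hq1 := hq.2
    rw [tminus_eq l lam I hstrict q]
    obtain ⟨⟨q1, q2⟩, hqS⟩ := q
    have hbs := hqS
    rw [mem_shift] at hbs
    simp only at hq1 ⊢
    subst hq1
    simp only [Prod.mk.injEq, true_and]
    split_ifs <;> first | rfl | (exfalso; omega)
  refine Eq.trans (Finset.sum_congr rfl hrow) ?_
  rw [← Finset.sum_subset (Finset.Icc_subset_Icc (show 1 ≤ i by omega) le_rfl)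
    (fun r hr hr' => by
      rw [Finset.mem_Icc] at hr
      rw [Finset.mem_Icc] at hr'
      rw [if_neg]
      rintro ⟨h1, -⟩
      omega)]
  apply Finset.sum_congr rfl
  intro r hr
  rw [Finset.mem_Icc] at hr
  rw [indB]
  refine if_congr ?_ rfl rfl
  omega

include hstrict hij in
lemma sumC_eq [Fintype ↥(shiftCells l lam)] :
    (∑ᶠ q : ↥(shiftCells l lam),
        if (q : ℕ × ℕ).1 < i ∧ (q : ℕ × ℕ).2 < j ∧ (q : ℕ × ℕ).1 < (q : ℕ × ℕ).2 then
          Tminus q I else 0) =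
      ∑ r ∈ Finset.Ico 1 i, indC l lam I j r := by
  have hijS := hij
  rw [mem_shift] at hijS
  classical
  rw [finsum_eq_sum_of_fintype]
  rw [← Finset.sum_fiberwise_of_maps_to
    (g := fun q : ↥(shiftCells l lam) => (q : ℕ × ℕ).1) (t := Finset.Icc 1 l)
    (fun q _ => by
      have hq := q.2
      rw [← Prod.mk.eta (p := (q : ℕ × ℕ)), mem_shift] at hq
      simp only [Finset.mem_Icc]
      omega)]
  have hrow : ∀ r ∈ Finset.Icc 1 l,
      (∑ q ∈ Finset.univ.filter (fun q : ↥(shiftCells l lam) => (q : ℕ × ℕ).1 = r),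
        (if (q : ℕ × ℕ).1 < i ∧ (q : ℕ × ℕ).2 < j ∧ (q : ℕ × ℕ).1 < (q : ℕ × ℕ).2 then
          Tminus q I else 0)) =
      (if r < i ∧ r + nu l lam I r ≤ j ∧ 2 ≤ nu l lam I r ∧
          nu l lam I (r + 1) + 2 ≤ nu l lam I r then (1:ℝ) else 0) := by
    intro r hr
    rw [Finset.mem_Icc] at hr
    rw [← rowsum l lam (r := r) (c := r + nu l lam I r - 1)
      (P := r < i ∧ r + nu l lam I r ≤ j ∧ 2 ≤ nu l lam I r ∧
        nu l lam I (r + 1) + 2 ≤ nu l lam I r)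
      (by
        intro hP
        exact memB_S l lam I ((memB_iff l lam I).2 (by omega)))]
    apply Finset.sum_congr rfl
    intro q hq
    rw [Finset.mem_filter] at hq
    have hq1 := hq.2
    rw [tminus_eq l lam I hstrict q]
    obtain ⟨⟨q1, q2⟩, hqS⟩ := q
    have hbs := hqS
    rw [mem_shift] at hbs
    simp only at hq1 ⊢
    subst hq1
    simp only [Prod.mk.injEq, true_and]
    split_ifs <;> first | rfl | (exfalso; omega)
  refine Eq.trans (Finset.sum_congr rfl hrow) ?_
  rw [← Finset.sum_subset (show Finset.Ico 1 i ⊆ Finset.Icc 1 l by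
      intro r hr
      rw [Finset.mem_Ico] at hr
      rw [Finset.mem_Icc]
      omega)
    (fun r hr hr' => by
      rw [Finset.mem_Icc] at hr
      rw [Finset.mem_Ico] at hr'
      rw [if_neg]
      rintro ⟨h1, -⟩
      omega)]
  apply Finset.sum_congr rfl
  intro r hr
  rw [Finset.mem_Ico] at hr
  rw [indC]
  refine if_congr ?_ rfl rfl
  omega

include hstrict hij in
lemma sumD_eq [Fintype ↥(shiftCells l lam)] :
    (∑ᶠ q : ↥(shiftCells l lam),
        if i < (q : ℕ × ℕ).1 ∧ j < (q : ℕ × ℕ).2 ∧ (q : ℕ × ℕ).1 < (q : ℕ × ℕ).2 then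
          Tplus q I else 0) =
      ∑ r ∈ Finset.Icc (i + 1) l, indD l lam I j r := by
  have hijS := hij
  rw [mem_shift] at hijS
  classical
  rw [finsum_eq_sum_of_fintype]
  rw [← Finset.sum_fiberwise_of_maps_to
    (g := fun q : ↥(shiftCells l lam) => (q : ℕ × ℕ).1) (t := Finset.Icc 1 l)
    (fun q _ => by
      have hq := q.2
      rw [← Prod.mk.eta (p := (q : ℕ × ℕ)), mem_shift] at hq
      simp only [Finset.mem_Icc]
      omega)]
  have hrow : ∀ r ∈ Finset.Icc 1 l,
      (∑ q ∈ Finset.univ.filter (fun q : ↥(shiftCells l lam) => (q : ℕ × ℕ).1 = r),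
        (if i < (q : ℕ × ℕ).1 ∧ j < (q : ℕ × ℕ).2 ∧ (q : ℕ × ℕ).1 < (q : ℕ × ℕ).2 then
          Tplus q I else 0)) =
      (if i < r ∧ j + 1 ≤ r + nu l lam I r ∧ 1 ≤ nu l lam I r ∧
          nu l lam I r < lam r ∧
          (r = 1 ∨ nu l lam I r + 2 ≤ nu l lam I (r - 1)) then (1:ℝ) else 0) := by
    intro r hr
    rw [Finset.mem_Icc] at hr
    rw [← rowsum l lam (r := r) (c := r + nu l lam I r)
      (P := i < r ∧ j + 1 ≤ r + nu l lam I r ∧ 1 ≤ nu l lam I r ∧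
        nu l lam I r < lam r ∧
        (r = 1 ∨ nu l lam I r + 2 ≤ nu l lam I (r - 1)))
      (by
        intro hP
        rw [mem_shift]
        omega)]
    apply Finset.sum_congr rfl
    intro q hq
    rw [Finset.mem_filter] at hq
    have hq1 := hq.2
    rw [tplus_eq l lam I hstrict q]
    obtain ⟨⟨q1, q2⟩, hqS⟩ := q
    have hbs := hqS
    rw [mem_shift] at hbs
    simp only at hq1 ⊢
    subst hq1
    simp only [Prod.mk.injEq, true_and]
    split_ifs <;> first | rfl | (exfalso; omega)
  refine Eq.trans (Finset.sum_congr rfl hrow) ?_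
  rw [← Finset.sum_subset (Finset.Icc_subset_Icc (show 1 ≤ i + 1 by omega) le_rfl)
    (fun r hr hr' => by
      rw [Finset.mem_Icc] at hr
      rw [Finset.mem_Icc] at hr'
      rw [if_neg]
      rintro ⟨h1, -⟩
      omega)]
  apply Finset.sum_congr rfl
  intro r hr
  rw [Finset.mem_Icc] at hr
  rw [indD]
  refine if_congr ?_ rfl rfl
  omega

-- ### chunk 4
lemma nu_zero {r : ℕ} (h : l < r) : nu l lam I r = 0 := by
  by_contra h'
  have := nu_row l lam I (r := r) (by omega)
  omega

lemma contains_iff (r : ℕ) (hl1 : 1 ≤ lam (r + 1)) :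
    ContainsCorner l lam I r ↔
      lam (r + 1) ≤ nu l lam I (r + 1) ∧ lam (r + 1) + 2 ≤ nu l lam I r := by
  have h : ContainsCorner l lam I r ↔
      memB l lam I (r + 1) (lam (r + 1) + r) ∧ memB l lam I r (lam (r + 1) + r + 1) :=
    Iff.rfl
  rw [h, memB_iff, memB_iff]
  omega

lemma indK_eq (hpos : ∀ i, 1 ≤ i → i ≤ l → 1 ≤ lam i) (r : ℕ) :
    indK l lam I i j r =
      if (1 ≤ r ∧ r + 1 ≤ l ∧ lam (r + 1) + 2 ≤ lam r) ∧ i ≤ r ∧ j ≤ lam (r + 1) + r ∧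
          lam (r + 1) ≤ nu l lam I (r + 1) ∧ lam (r + 1) + 2 ≤ nu l lam I r then 1 else 0 := by
  rw [indK]
  refine if_congr ?_ rfl rfl
  constructor
  · rintro ⟨hc, h2, h3, h4⟩
    obtain ⟨a, b, c⟩ := hc
    have hl1 : 1 ≤ lam (r + 1) := hpos (r + 1) (by omega) b
    have h5 := (contains_iff l lam I r hl1).1 h4
    exact ⟨⟨a, b, c⟩, h2, h3, h5⟩
  · rintro ⟨⟨a, b, c⟩, h2, h3, h4⟩
    have hl1 : 1 ≤ lam (r + 1) := hpos (r + 1) (by omega) b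
    exact ⟨⟨a, b, c⟩, h2, h3, (contains_iff l lam I r hl1).2 h4⟩

lemma cardK :
    ((Nat.card {i' : ℕ // IsCorner l lam i' ∧ i ≤ i' ∧ j ≤ lam (i' + 1) + i' ∧
        ContainsCorner l lam I i'} : ℕ) : ℝ) =
      ∑ r ∈ Finset.Icc i l, indK l lam I i j r := by
  classical
  have e : {i' : ℕ // IsCorner l lam i' ∧ i ≤ i' ∧ j ≤ lam (i' + 1) + i' ∧
      ContainsCorner l lam I i'} ≃
      {i' // i' ∈ (Finset.Icc i l).filter (fun r =>
        IsCorner l lam r ∧ i ≤ r ∧ j ≤ lam (r + 1) + r ∧ ContainsCorner l lam I r)} :=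
    Equiv.subtypeEquivRight (fun r => by
      rw [Finset.mem_filter, Finset.mem_Icc]
      constructor
      · intro h
        obtain ⟨a, b, c⟩ := h.1
        exact ⟨⟨h.2.1, by omega⟩, h⟩
      · exact fun h => h.2)
  rw [Nat.card_congr e, Nat.card_eq_finsetCard, Finset.card_filter, Nat.cast_sum]
  apply Finset.sum_congr rfl
  intro r hr
  by_cases h : IsCorner l lam r ∧ i ≤ r ∧ j ≤ lam (r + 1) + r ∧ ContainsCorner l lam I r
  · simp [indK, h]
  · simp [indK, h]


include hstrict hij in
lemma Ulem : ∀ m, 1 ≤ m → m ≤ i →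
    (∑ r ∈ Finset.Ico 1 (m + 1), indA l lam I j r)
      - (∑ r ∈ Finset.Ico 1 m, indC l lam I j r)
      = if m + nu l lam I m ≤ j then (1 : ℝ) else 0 := by
  have hijS := hij
  rw [mem_shift] at hijS
  intro m hm1
  induction m, hm1 using Nat.le_induction with
  | base =>
    intro _
    rw [Finset.sum_Ico_succ_top (by omega : (1:ℕ) ≤ 1), Finset.Ico_self, Finset.sum_empty,
      Finset.sum_empty]
    rw [indA]
    have h : (1 + nu l lam I 1 ≤ j ∧ (1 = 1 ∨ nu l lam I 1 + 2 ≤ nu l lam I (1 - 1))) ↔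
        (1 + nu l lam I 1 ≤ j) := by
      constructor
      · exact fun h => h.1
      · exact fun h => ⟨h, Or.inl rfl⟩
    rw [if_congr h rfl rfl]
    ring
  | succ m hm ih =>
    intro hmi
    have hid := ih (by omega)
    rw [Finset.sum_Ico_succ_top (f := indA l lam I j) (a := 1) (b := m + 1)
        (show 1 ≤ m + 1 by omega),
      Finset.sum_Ico_succ_top (f := indC l lam I j) (a := 1) (b := m)
        (show 1 ≤ m by omega)]
    have hs' : nu l lam I (m + 1) = 0 ∨ nu l lam I (m + 1) < nu l lam I m := by
      rcases Nat.eq_zero_or_pos (nu l lam I (m + 1)) with h | h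
      · exact Or.inl h
      · exact Or.inr (nu_strict l lam I hstrict (by omega) h)
    simp only [indA, indC, Nat.add_sub_cancel] at hid ⊢
    by_cases h3 : m + nu l lam I m ≤ j
    · rw [if_pos h3] at hid
      split_ifs <;> first | linarith | (exfalso; omega)
    · rw [if_neg h3] at hid
      split_ifs <;> first | linarith | (exfalso; omega)
variable (hpos : ∀ i, 1 ≤ i → i ≤ l → 1 ≤ lam i)

include hstrict hij hpos in
lemma Llem : ∀ m, i ≤ m → m ≤ l →
    (∑ r ∈ Finset.Icc m l, indB l lam I j r)
      - (∑ r ∈ Finset.Icc (m + 1) l, indD l lam I j r)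
      = (if 1 ≤ nu l lam I m ∧ j + 1 ≤ m + nu l lam I m then (1 : ℝ) else 0)
        + ∑ r ∈ Finset.Icc m l, indK l lam I i j r := by
  have hijS := hij
  rw [mem_shift] at hijS
  -- base case at m = l
  have hbase : i ≤ l →
      (∑ r ∈ Finset.Icc l l, indB l lam I j r)
        - (∑ r ∈ Finset.Icc (l + 1) l, indD l lam I j r)
        = (if 1 ≤ nu l lam I l ∧ j + 1 ≤ l + nu l lam I l then (1 : ℝ) else 0)
          + ∑ r ∈ Finset.Icc l l, indK l lam I i j r := by
    intro hil
    rw [Finset.Icc_self, Finset.sum_singleton, Finset.sum_singleton,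
      Finset.Icc_eq_empty (by omega), Finset.sum_empty]
    have hz : nu l lam I (l + 1) = 0 := nu_zero l lam I (by omega)
    have hKl : indK l lam I i j l = 0 := by
      rw [indK, if_neg]
      rintro ⟨⟨-, h, -⟩, -⟩
      omega
    rw [hKl, indB]
    have h : (j + 1 ≤ l + nu l lam I l ∧
        ((nu l lam I l = 1 ∧ nu l lam I (l + 1) = 0) ∨
          (2 ≤ nu l lam I l ∧ nu l lam I (l + 1) + 2 ≤ nu l lam I l))) ↔
        (1 ≤ nu l lam I l ∧ j + 1 ≤ l + nu l lam I l) := by omega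
    rw [if_congr h rfl rfl]
    ring
  have main : ∀ d m, i ≤ m → m ≤ l → l - m ≤ d →
      (∑ r ∈ Finset.Icc m l, indB l lam I j r)
        - (∑ r ∈ Finset.Icc (m + 1) l, indD l lam I j r)
        = (if 1 ≤ nu l lam I m ∧ j + 1 ≤ m + nu l lam I m then (1 : ℝ) else 0)
          + ∑ r ∈ Finset.Icc m l, indK l lam I i j r := by
    intro d
    induction d with
    | zero =>
      intro m him hml hd
      have hme : m = l := by omega
      subst hme
      exact hbase him
    | succ d ihd =>
      intro m him hml hd
      rcases eq_or_lt_of_le hml with hme | hlt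
      · subst hme
        exact hbase him
      · have hid := ihd (m + 1) (by omega) (by omega) (by omega)
        have hsplit : ∀ f : ℕ → ℝ,
            ∑ r ∈ Finset.Icc m l, f r = f m + ∑ r ∈ Finset.Icc (m + 1) l, f r := by
          intro f
          rw [show Finset.Icc m l = insert m (Finset.Icc (m + 1) l) from by
              ext x
              simp only [Finset.mem_Icc, Finset.mem_insert]
              omega,
            Finset.sum_insert (by simp only [Finset.mem_Icc]; omega)]
        have hsplit2 : ∀ f : ℕ → ℝ,
            ∑ r ∈ Finset.Icc (m + 1) l, f r
              = f (m + 1) + ∑ r ∈ Finset.Icc (m + 1 + 1) l, f r := by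
          intro f
          rw [show Finset.Icc (m + 1) l = insert (m + 1) (Finset.Icc (m + 1 + 1) l) from by
              ext x
              simp only [Finset.mem_Icc, Finset.mem_insert]
              omega,
            Finset.sum_insert (by simp only [Finset.mem_Icc]; omega)]
        rw [hsplit (indB l lam I j), hsplit (indK l lam I i j),
          hsplit2 (indD l lam I j)]
        -- step identity
        have hs' : nu l lam I (m + 1) = 0 ∨ nu l lam I (m + 1) < nu l lam I m := by
          rcases Nat.eq_zero_or_pos (nu l lam I (m + 1)) with h | h
          · exact Or.inl h
          · exact Or.inr (nu_strict l lam I hstrict (by omega) h)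
        have hν1 : nu l lam I (m + 1) = 0 ∨ nu l lam I (m + 1) ≤ lam (m + 1) := by
          rcases Nat.eq_zero_or_pos (nu l lam I (m + 1)) with h | h
          · exact Or.inl h
          · exact Or.inr (nu_row l lam I h).2.2
        have hνm : nu l lam I m = 0 ∨ nu l lam I m ≤ lam m := by
          rcases Nat.eq_zero_or_pos (nu l lam I m) with h | h
          · exact Or.inl h
          · exact Or.inr (nu_row l lam I h).2.2
        have hp1 : 1 ≤ lam (m + 1) := hpos (m + 1) (by omega) (by omega)
        have hstep : indB l lam I j m - indD l lam I j (m + 1)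
            + (if 1 ≤ nu l lam I (m + 1) ∧ j + 1 ≤ m + 1 + nu l lam I (m + 1)
                then (1 : ℝ) else 0)
            = (if 1 ≤ nu l lam I m ∧ j + 1 ≤ m + nu l lam I m then (1 : ℝ) else 0)
              + indK l lam I i j m := by
          rw [indB, indD, indK_eq l lam I i j hpos]
          simp only [Nat.add_sub_cancel]
          split_ifs <;> first | (exfalso; omega) | norm_num
        linarith [hid, hstep]
  exact fun m him hml => main (l - m) m him hml le_rfl
end St10

/-- Lemma `lem:shiftrookexpectation`.  Let `λ` be a strict partition of
length `l` and `[i,j] ∈ P_λ^shift` a box.  For every order ideal `ν ∈ J(P_λ^shift)`,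
`R^shift_{ij}(ν)` equals `1` plus the number of outward corners of `λ` occurring strictly
southeast of the center of the box `[i,j]` (i.e. corners indexed by `i'` with `i ≤ i'` and
`j ≤ λ(i'+1) + i'`) that are contained in `ν`.  Consequently, for any probability distribution
`μ` on `J(P_λ^shift)`, `E(μ; R^shift_{ij}) = 1 + Σ_{c ∈ C^shift_{ij}(λ)} P(ν ∼ μ; c ∈ ν)`. -/
theorem statement10 (l : ℕ) (lam : ℕ → ℕ)
    (hpos : ∀ i, 1 ≤ i → i ≤ l → 1 ≤ lam i)
    (hstrict : ∀ i, 1 ≤ i → i + 1 ≤ l → lam (i + 1) < lam i)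
    (hzero : ∀ i, l < i → lam i = 0)
    (i j : ℕ) (hij : (i, j) ∈ shiftCells l lam) :
    (∀ I : OIdeal ↥(shiftCells l lam),
      Rshift (shiftCells l lam) i j I =
        1 + (Nat.card {i' : ℕ // IsCorner l lam i' ∧ i ≤ i' ∧ j ≤ lam (i' + 1) + i' ∧
              ContainsCorner l lam I i'} : ℝ)) ∧
    (∀ μ : OIdeal ↥(shiftCells l lam) → ℝ, IsProbDist μ →
      expect μ (Rshift (shiftCells l lam) i j) =
        1 + ∑ᶠ (i' : ℕ),
          if IsCorner l lam i' ∧ i ≤ i' ∧ j ≤ lam (i' + 1) + i' then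
            (∑ᶠ (I : OIdeal ↥(shiftCells l lam)),
              if ContainsCorner l lam I i' then μ I else 0)
          else 0) := by
  classical
  have hijS := hij
  rw [St10.mem_shift] at hijS
  have hfin : (shiftCells l lam).Finite := St10.S_finite l lam hstrict
  haveI : Fintype ↥(shiftCells l lam) := hfin.fintype
  have part1 : ∀ I : OIdeal ↥(shiftCells l lam),
      Rshift (shiftCells l lam) i j I =
        1 + (Nat.card {i' : ℕ // IsCorner l lam i' ∧ i ≤ i' ∧ j ≤ lam (i' + 1) + i' ∧
              ContainsCorner l lam I i'} : ℝ) := by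
    intro I
    rw [Rshift]
    rw [St10.sumA_eq l lam I hstrict i j hij, St10.sumB_eq l lam I hstrict i j hij,
      St10.sumC_eq l lam I hstrict i j hij, St10.sumD_eq l lam I hstrict i j hij,
      St10.cardK l lam I i j]
    have hU := St10.Ulem l lam I hstrict i j hij i (by omega) le_rfl
    have hL := St10.Llem l lam I hstrict i j hij hpos i le_rfl (by omega)
    rw [show Finset.Ico 1 (i + 1) = Finset.Icc 1 i from Finset.Ico_add_one_right_eq_Icc 1 i] at hU
    have hone : (if i + St10.nu l lam I i ≤ j then (1 : ℝ) else 0)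
        + (if 1 ≤ St10.nu l lam I i ∧ j + 1 ≤ i + St10.nu l lam I i then (1 : ℝ) else 0)
        = 1 := by
      split_ifs <;> first | (exfalso; omega) | norm_num
    linarith [hU, hL, hone]
  refine ⟨part1, ?_⟩
  intro μ hμ
  haveI : Fintype (OIdeal ↥(shiftCells l lam)) := Fintype.ofFinite _
  rw [expect, finsum_eq_sum_of_fintype]
  have hsup : (Function.support fun i' =>
      if IsCorner l lam i' ∧ i ≤ i' ∧ j ≤ lam (i' + 1) + i' then
        (∑ᶠ I : OIdeal ↥(shiftCells l lam), if ContainsCorner l lam I i' then μ I else 0)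
      else 0) ⊆ ↑(Finset.Icc i l) := by
    intro r hr
    rw [Function.mem_support] at hr
    by_contra hmem
    apply hr
    rw [if_neg]
    rintro ⟨⟨-, hc, -⟩, hi, -⟩
    exact hmem (by rw [Finset.mem_coe, Finset.mem_Icc]; omega)
  rw [finsum_eq_sum_of_support_subset _ hsup]
  have hinner : ∀ r : ℕ, (∑ᶠ I : OIdeal ↥(shiftCells l lam),
      if ContainsCorner l lam I r then μ I else 0)
      = ∑ I : OIdeal ↥(shiftCells l lam), if ContainsCorner l lam I r then μ I else 0 :=
    fun r => finsum_eq_sum_of_fintype _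
  have hpt : ∀ I, μ I * Rshift (shiftCells l lam) i j I
      = μ I + ∑ r ∈ Finset.Icc i l,
          (if IsCorner l lam r ∧ i ≤ r ∧ j ≤ lam (r + 1) + r then
            (if ContainsCorner l lam I r then μ I else 0) else 0) := by
    intro I
    rw [part1 I, St10.cardK l lam I i j, mul_add, mul_one, Finset.mul_sum]
    congr 1
    apply Finset.sum_congr rfl
    intro r hr
    rw [St10.indK]
    by_cases h1 : IsCorner l lam r ∧ i ≤ r ∧ j ≤ lam (r + 1) + r
    · by_cases h2 : ContainsCorner l lam I r
      · rw [if_pos ⟨h1.1, h1.2.1, h1.2.2, h2⟩, if_pos h1, if_pos h2, mul_one]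
      · rw [if_neg (by tauto), if_pos h1, if_neg h2, mul_zero]
    · rw [if_neg (by tauto), if_neg h1, mul_zero]
  refine Eq.trans (Finset.sum_congr rfl fun I _ => hpt I) ?_
  rw [Finset.sum_add_distrib]
  have hmu1 : (∑ I : OIdeal ↥(shiftCells l lam), μ I) = 1 := by
    rw [← finsum_eq_sum_of_fintype]
    exact hμ.2
  rw [hmu1, Finset.sum_comm]
  congr 1
  apply Finset.sum_congr rfl
  intro r hr
  rw [hinner r]
  by_cases h1 : IsCorner l lam r ∧ i ≤ r ∧ j ≤ lam (r + 1) + r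
  · rw [if_pos h1]
    apply Finset.sum_congr rfl
    intro I _
    rw [if_pos h1]
  · rw [if_neg h1]
    exact Finset.sum_eq_zero fun I _ => if_neg h1

end CDEPaper
end
end

section
/- Let λ be a strict partition that is shifted-balanced of Type (1) or Type (2). Then there exist integers r_{ij} for [i,j] ∈ P_λ^shift such that: (a) for every box [i,j] ∈ P_λ^shift with i ≠ j, Σ_{[i',j] ∈ P_λ^shift} r_{i',j} = 2 and Σ_{[i,j'] ∈ P_λ^shift} r_{i,j'} = 2; (b) for every main diagonal box [i,i] ∈ P_λ^shift, Σ_{i'≤i, j'≤i, [i',j']∈P_λ^shift} r_{i',j'} + Σ_{i'≥i, j'≥i, [i',j']∈P_λ^shift} r_{i',j'} = 4; (c) for every outward corner c ∈ C^shift(λ), Σ over boxes [i,j] ∈ P_λ^shift with c ∈ C^shift_{ij}(λ) of r_{ij} equals 0. -/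
open scoped Classical

noncomputable section

namespace CDEPaper

set_option maxHeartbeats 2000000 in
/-- Lemma `lem:shiftrookplacement`.  Let `λ` be a strict partition that is
shifted-balanced of Type (1) (`λ = δ_n + ν`) or Type (2) (`λ = δ_n + ν + (n-1-k)^n`), where
`0 ≤ k < n` and `ν` is balanced as a straight shape with height and width both `k`.  Then
there exist integers `r_{ij}` for `[i,j] ∈ P_λ^shift` such that:
(a) for every non-diagonal box `[i,j]`, the column sum and the row sum of the `r`'s through
    `[i,j]` both equal `2`;
(b) for every main diagonal box `[i,i]`, the sum of the `r`'s over the boxes weakly northwest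
    of `[i,i]` plus the sum over the boxes weakly southeast of `[i,i]` equals `4`;
(c) for every outward corner `c ∈ C^shift(λ)` (indexed by `i'`), the sum of `r_{ij}` over the
    boxes `[i,j]` with `c ∈ C^shift_{ij}(λ)` equals `0`. -/
theorem statement11 (n k : ℕ) (hkn : k < n) (nu : ℕ → ℕ) (hbal : BalancedSquare k nu)
    (lam : ℕ → ℕ) (hlam0 : ∀ i, n < i → lam i = 0)
    (htype : (∀ i, 1 ≤ i → i ≤ n → lam i = (n + 1 - i) + nu i) ∨
             (∀ i, 1 ≤ i → i ≤ n → lam i = (n + 1 - i) + nu i + (n - 1 - k))) :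
    ∃ r : ℕ × ℕ → ℤ,
      (∀ b : ℕ × ℕ, b ∈ shiftCells n lam → b.1 ≠ b.2 →
        (∑ᶠ (q : ↥(shiftCells n lam)),
            if (q : ℕ × ℕ).2 = b.2 then r (q : ℕ × ℕ) else 0) = 2 ∧
        (∑ᶠ (q : ↥(shiftCells n lam)),
            if (q : ℕ × ℕ).1 = b.1 then r (q : ℕ × ℕ) else 0) = 2) ∧
      (∀ i : ℕ, (i, i) ∈ shiftCells n lam →
        (∑ᶠ (q : ↥(shiftCells n lam)),
            if (q : ℕ × ℕ).1 ≤ i ∧ (q : ℕ × ℕ).2 ≤ i then r (q : ℕ × ℕ) else 0) +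
        (∑ᶠ (q : ↥(shiftCells n lam)),
            if i ≤ (q : ℕ × ℕ).1 ∧ i ≤ (q : ℕ × ℕ).2 then r (q : ℕ × ℕ) else 0) = 4) ∧
      (∀ i' : ℕ, IsCorner n lam i' →
        (∑ᶠ (q : ↥(shiftCells n lam)),
            if (q : ℕ × ℕ).1 ≤ i' ∧ (q : ℕ × ℕ).2 ≤ lam (i' + 1) + i' then
              r (q : ℕ × ℕ) else 0) = 0) := by
  classical
  obtain ⟨hmono, hpos, hzero, hnu1, hcornbal⟩ := hbal
  obtain ⟨c, hc0, hcc⟩ : ∃ c : ℕ, (c = 0 ∨ c = n - 1 - k) ∧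
      ∀ i, 1 ≤ i → i ≤ n → lam i = (n + 1 - i) + nu i + c := by
    rcases htype with h | h
    · exact ⟨0, Or.inl rfl, fun i h1 h2 => by have := h i h1 h2; omega⟩
    · exact ⟨n - 1 - k, Or.inr rfl, h⟩
  have hn1 : 1 ≤ n := by omega
  have hnule' : ∀ i, nu (i + 1) ≤ k := by
    intro i
    induction i with
    | zero => exact le_of_eq hnu1
    | succ m ih => exact le_trans (hmono (m + 1) (by omega)) ih
  have hnule : ∀ i, 1 ≤ i → nu i ≤ k := by
    intro i hi
    obtain ⟨m, rfl⟩ : ∃ m, i = m + 1 := ⟨i - 1, by omega⟩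
    exact hnule' m
  have hlami : ∀ i, 1 ≤ i → i ≤ n → lam i + i = n + 1 + nu i + c := by
    intro i h1 h2
    have := hcc i h1 h2
    omega
  have hL1 : lam 1 = n + k + c := by
    have h := hlami 1 le_rfl hn1
    rw [hnu1] at h
    omega
  have hnun : nu n = 0 := hzero n hkn
  have hlamn : lam n + n = n + 1 + c := by
    have h := hlami n hn1 le_rfl
    rw [hnun] at h
    omega
  have htop : ∀ i, 1 ≤ i → i ≤ n → lam i + i ≤ lam 1 + 1 := by
    intro i h1 h2
    have h3 := hlami i h1 h2
    have h4 := hnule i h1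
    omega
  set L := lam 1 with hLdef
  set F : Finset (ℕ × ℕ) := (Finset.Icc 1 n ×ˢ Finset.Icc 1 L).filter
      (fun x => x.1 ≤ x.2 ∧ x.2 < lam x.1 + x.1) with hFdef
  have hmemF : ∀ x : ℕ × ℕ, x ∈ F ↔
      1 ≤ x.1 ∧ x.1 ≤ n ∧ x.1 ≤ x.2 ∧ x.2 < lam x.1 + x.1 := by
    intro x
    rw [hFdef]
    simp only [Finset.mem_filter, Finset.mem_product, Finset.mem_Icc]
    constructor
    · rintro ⟨⟨⟨a, b⟩, -, -⟩, d, e⟩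
      exact ⟨a, b, d, e⟩
    · rintro ⟨a, b, d, e⟩
      have h5 := htop x.1 a b
      exact ⟨⟨⟨a, b⟩, by omega, by omega⟩, d, e⟩
  have hSF : shiftCells n lam = ↑F := by
    ext x
    rw [Finset.mem_coe, hmemF]
    exact Iff.rfl
  have hsum : ∀ f : ℕ × ℕ → ℤ,
      (∑ᶠ q : ↥(shiftCells n lam), f (q : ℕ × ℕ)) = ∑ x ∈ F, f x := by
    intro f
    rw [finsum_set_coe_eq_finsum_mem, hSF, finsum_mem_coe_finset]
  have h11F : ((1, 1) : ℕ × ℕ) ∈ F := by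
    rw [hmemF]
    refine ⟨le_rfl, hn1, le_rfl, ?_⟩
    show (1 : ℕ) < lam 1 + 1
    omega
  have h1nF : ((1, n) : ℕ × ℕ) ∈ F := by
    rw [hmemF]
    refine ⟨le_rfl, hn1, hn1, ?_⟩
    show n < lam 1 + 1
    omega
  have hnnF : ((n, n) : ℕ × ℕ) ∈ F := by
    rw [hmemF]
    refine ⟨hn1, le_rfl, le_rfl, ?_⟩
    show n < lam n + n
    omega
  have h1jF : ∀ j, n + 1 ≤ j → j ≤ L → ((1, j) : ℕ × ℕ) ∈ F := by
    intro j hj1 hj2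
    rw [hmemF]
    refine ⟨le_rfl, hn1, ?_, ?_⟩
    · show (1 : ℕ) ≤ j
      omega
    · show j < lam 1 + 1
      omega
  have httF : ∀ t, 1 ≤ t → t ≤ n → ((t, t) : ℕ × ℕ) ∈ F := by
    intro t h1 h2
    rw [hmemF]
    have h3 := hlami t h1 h2
    refine ⟨h1, h2, le_rfl, ?_⟩
    show t < lam t + t
    omega
  set r : ℕ × ℕ → ℤ := fun x =>
    (if x = (1, 1) then 3 - (L : ℤ) else 0)
    + (if x = (1, n) then 2 * (n : ℤ) - 1 - (L : ℤ) else 0)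
    + (if x.1 = 1 ∧ n + 1 ≤ x.2 ∧ x.2 ≤ L then (2 : ℤ) else 0)
    + (if x.1 = x.2 ∧ 2 ≤ x.1 ∧ x.1 ≤ n - 1 then (2 : ℤ) else 0)
    + (if x = (n, n) then (if 2 ≤ n then (L : ℤ) - 2 * (n : ℤ) + 3 else 0) else 0)
    with hrdef
  have key : ∀ (P : ℕ × ℕ → Prop) [inst : ∀ x, Decidable (P x)],
      (∑ x ∈ F, if P x then r x else 0)
        = (if P (1, 1) then 3 - (L : ℤ) else 0)
          + (if P (1, n) then 2 * (n : ℤ) - 1 - (L : ℤ) else 0)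
          + 2 * (((Finset.Icc (n + 1) L).filter (fun j => P (1, j))).card : ℤ)
          + 2 * (((Finset.Icc 2 (n - 1)).filter (fun t => P (t, t))).card : ℤ)
          + (if P (n, n) ∧ 2 ≤ n then (L : ℤ) - 2 * (n : ℤ) + 3 else 0) := by
    intro P inst
    have hsplit : ∀ x ∈ F, (if P x then r x else 0)
        = (if x = (1, 1) then (if P x then 3 - (L : ℤ) else 0) else 0)
          + (if x = (1, n) then (if P x then 2 * (n : ℤ) - 1 - (L : ℤ) else 0) else 0)
          + (if P x ∧ x.1 = 1 ∧ n + 1 ≤ x.2 ∧ x.2 ≤ L then (2 : ℤ) else 0)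
          + (if P x ∧ x.1 = x.2 ∧ 2 ≤ x.1 ∧ x.1 ≤ n - 1 then (2 : ℤ) else 0)
          + (if x = (n, n) then (if P x ∧ 2 ≤ n then (L : ℤ) - 2 * (n : ℤ) + 3 else 0)
              else 0) := by
      intro x _
      by_cases hP : P x <;> simp [hrdef, hP]
    rw [Finset.sum_congr rfl hsplit]
    rw [Finset.sum_add_distrib, Finset.sum_add_distrib, Finset.sum_add_distrib,
      Finset.sum_add_distrib]
    have hinj1 : Function.Injective (fun j : ℕ => ((1, j) : ℕ × ℕ)) := by
      intro a b h
      simpa using h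
    have hinj2 : Function.Injective (fun t : ℕ => ((t, t) : ℕ × ℕ)) := by
      intro a b h
      simpa using h
    have himg1 : F.filter (fun x => P x ∧ x.1 = 1 ∧ n + 1 ≤ x.2 ∧ x.2 ≤ L)
        = ((Finset.Icc (n + 1) L).filter (fun j => P (1, j))).image
            (fun j : ℕ => ((1, j) : ℕ × ℕ)) := by
      ext x
      simp only [Finset.mem_filter, Finset.mem_image, Finset.mem_Icc]
      constructor
      · rintro ⟨-, hPx, hx1, hx2, hx3⟩
        have hx : ((1 : ℕ), x.2) = x := Prod.ext hx1.symm rfl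
        exact ⟨x.2, ⟨⟨hx2, hx3⟩, by rw [hx]; exact hPx⟩, hx⟩
      · rintro ⟨j, ⟨⟨hj1, hj2⟩, hPj⟩, rfl⟩
        exact ⟨h1jF j hj1 hj2, hPj, rfl, hj1, hj2⟩
    have himg2 : F.filter (fun x => P x ∧ x.1 = x.2 ∧ 2 ≤ x.1 ∧ x.1 ≤ n - 1)
        = ((Finset.Icc 2 (n - 1)).filter (fun t => P (t, t))).image
            (fun t : ℕ => ((t, t) : ℕ × ℕ)) := by
      ext x
      simp only [Finset.mem_filter, Finset.mem_image, Finset.mem_Icc]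
      constructor
      · rintro ⟨-, hPx, hx1, hx2, hx3⟩
        have hx : ((x.1 : ℕ), x.1) = x := Prod.ext rfl hx1
        exact ⟨x.1, ⟨⟨hx2, hx3⟩, by rw [hx]; exact hPx⟩, hx⟩
      · rintro ⟨t, ⟨⟨ht1, ht2⟩, hPt⟩, rfl⟩
        exact ⟨httF t (by omega) (by omega), hPt, rfl, ht1, ht2⟩
    have e1 : (∑ x ∈ F, if x = (1, 1) then (if P x then 3 - (L : ℤ) else 0) else 0)
        = (if P (1, 1) then 3 - (L : ℤ) else 0) := by
      rw [Finset.sum_ite_eq' F ((1, 1) : ℕ × ℕ)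
        (fun x => if P x then 3 - (L : ℤ) else 0), if_pos h11F]
    have e2 : (∑ x ∈ F, if x = (1, n) then
          (if P x then 2 * (n : ℤ) - 1 - (L : ℤ) else 0) else 0)
        = (if P (1, n) then 2 * (n : ℤ) - 1 - (L : ℤ) else 0) := by
      rw [Finset.sum_ite_eq' F ((1, n) : ℕ × ℕ)
        (fun x => if P x then 2 * (n : ℤ) - 1 - (L : ℤ) else 0), if_pos h1nF]
    have e5 : (∑ x ∈ F, if x = (n, n) then
          (if P x ∧ 2 ≤ n then (L : ℤ) - 2 * (n : ℤ) + 3 else 0) else 0)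
        = (if P (n, n) ∧ 2 ≤ n then (L : ℤ) - 2 * (n : ℤ) + 3 else 0) := by
      rw [Finset.sum_ite_eq' F ((n, n) : ℕ × ℕ)
        (fun x => if P x ∧ 2 ≤ n then (L : ℤ) - 2 * (n : ℤ) + 3 else 0), if_pos hnnF]
    have e3 : (∑ x ∈ F, if P x ∧ x.1 = 1 ∧ n + 1 ≤ x.2 ∧ x.2 ≤ L then (2 : ℤ) else 0)
        = 2 * (((Finset.Icc (n + 1) L).filter (fun j => P (1, j))).card : ℤ) := by
      rw [← Finset.sum_filter, himg1, Finset.sum_const,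
        Finset.card_image_of_injective _ hinj1, nsmul_eq_mul, mul_comm]
    have e4 : (∑ x ∈ F, if P x ∧ x.1 = x.2 ∧ 2 ≤ x.1 ∧ x.1 ≤ n - 1 then (2 : ℤ) else 0)
        = 2 * (((Finset.Icc 2 (n - 1)).filter (fun t => P (t, t))).card : ℤ) := by
      rw [← Finset.sum_filter, himg2, Finset.sum_const,
        Finset.card_image_of_injective _ hinj2, nsmul_eq_mul, mul_comm]
    rw [e1, e2, e3, e4, e5]
  refine ⟨r, ?_, ?_, ?_⟩
  · -- condition (a)
    intro b hb hbne
    have hb' : 1 ≤ b.1 ∧ b.1 ≤ n ∧ b.1 ≤ b.2 ∧ b.2 < lam b.1 + b.1 := hb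
    obtain ⟨hb1, hb2, hb3, hb4⟩ := hb'
    have hblt : b.1 < b.2 := lt_of_le_of_ne hb3 hbne
    have htopb := htop b.1 hb1 hb2
    constructor
    · -- column sum
      have e1 : (∑ᶠ (q : ↥(shiftCells n lam)),
            if (q : ℕ × ℕ).2 = b.2 then r (q : ℕ × ℕ) else 0)
          = ∑ x ∈ F, (if x.2 = b.2 then r x else 0) :=
        hsum (fun x => if x.2 = b.2 then r x else 0)
      have kk : (∑ x ∈ F, (if x.2 = b.2 then r x else 0))
          = (if (1 : ℕ) = b.2 then 3 - (L : ℤ) else 0)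
            + (if n = b.2 then 2 * (n : ℤ) - 1 - (L : ℤ) else 0)
            + 2 * (((Finset.Icc (n + 1) L).filter (fun j => j = b.2)).card : ℤ)
            + 2 * (((Finset.Icc 2 (n - 1)).filter (fun t => t = b.2)).card : ℤ)
            + (if n = b.2 ∧ 2 ≤ n then (L : ℤ) - 2 * (n : ℤ) + 3 else 0) :=
        key (fun x => x.2 = b.2)
      rw [e1, kk, Finset.filter_eq', Finset.filter_eq']
      simp only [Finset.mem_Icc, apply_ite Finset.card, Finset.card_singleton,
        Finset.card_empty]
      split_ifs <;> omega
    · -- row sum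
      have e2 : (∑ᶠ (q : ↥(shiftCells n lam)),
            if (q : ℕ × ℕ).1 = b.1 then r (q : ℕ × ℕ) else 0)
          = ∑ x ∈ F, (if x.1 = b.1 then r x else 0) :=
        hsum (fun x => if x.1 = b.1 then r x else 0)
      have kk : (∑ x ∈ F, (if x.1 = b.1 then r x else 0))
          = (if (1 : ℕ) = b.1 then 3 - (L : ℤ) else 0)
            + (if (1 : ℕ) = b.1 then 2 * (n : ℤ) - 1 - (L : ℤ) else 0)
            + 2 * (((Finset.Icc (n + 1) L).filter (fun j => (1 : ℕ) = b.1)).card : ℤ)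
            + 2 * (((Finset.Icc 2 (n - 1)).filter (fun t => t = b.1)).card : ℤ)
            + (if n = b.1 ∧ 2 ≤ n then (L : ℤ) - 2 * (n : ℤ) + 3 else 0) :=
        key (fun x => x.1 = b.1)
      rw [e2, kk, Finset.filter_eq']
      by_cases hb11 : (1 : ℕ) = b.1
      · rw [Finset.filter_true_of_mem (fun x _ => hb11)]
        simp only [Nat.card_Icc, Finset.mem_Icc, apply_ite Finset.card,
          Finset.card_singleton, Finset.card_empty]
        split_ifs <;> omega
      · rw [Finset.filter_false_of_mem (fun x _ => hb11), Finset.card_empty]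
        by_cases hbn : n = b.1
        · have hlamn2 : 2 ≤ lam n := by
            rw [hbn]
            omega
          have hLval : L = 2 * n - 1 := by
            rcases hc0 with h | h <;> omega
          simp only [Finset.mem_Icc, apply_ite Finset.card, Finset.card_singleton,
            Finset.card_empty]
          split_ifs <;> omega
        · simp only [Finset.mem_Icc, apply_ite Finset.card, Finset.card_singleton,
            Finset.card_empty]
          split_ifs <;> omega
  · -- condition (b)
    intro i hii
    have hi' : 1 ≤ i ∧ i ≤ n ∧ i ≤ i ∧ i < lam i + i := hii
    obtain ⟨hi1, hi2, -, -⟩ := hi'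
    have e1 : (∑ᶠ (q : ↥(shiftCells n lam)),
          if (q : ℕ × ℕ).1 ≤ i ∧ (q : ℕ × ℕ).2 ≤ i then r (q : ℕ × ℕ) else 0)
        = ∑ x ∈ F, (if x.1 ≤ i ∧ x.2 ≤ i then r x else 0) :=
      hsum (fun x => if x.1 ≤ i ∧ x.2 ≤ i then r x else 0)
    have e2 : (∑ᶠ (q : ↥(shiftCells n lam)),
          if i ≤ (q : ℕ × ℕ).1 ∧ i ≤ (q : ℕ × ℕ).2 then r (q : ℕ × ℕ) else 0)
        = ∑ x ∈ F, (if i ≤ x.1 ∧ i ≤ x.2 then r x else 0) :=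
      hsum (fun x => if i ≤ x.1 ∧ i ≤ x.2 then r x else 0)
    have k1 : (∑ x ∈ F, (if x.1 ≤ i ∧ x.2 ≤ i then r x else 0))
        = (if (1 : ℕ) ≤ i ∧ (1 : ℕ) ≤ i then 3 - (L : ℤ) else 0)
          + (if (1 : ℕ) ≤ i ∧ n ≤ i then 2 * (n : ℤ) - 1 - (L : ℤ) else 0)
          + 2 * (((Finset.Icc (n + 1) L).filter (fun j => (1 : ℕ) ≤ i ∧ j ≤ i)).card : ℤ)
          + 2 * (((Finset.Icc 2 (n - 1)).filter (fun t => t ≤ i ∧ t ≤ i)).card : ℤ)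
          + (if (n ≤ i ∧ n ≤ i) ∧ 2 ≤ n then (L : ℤ) - 2 * (n : ℤ) + 3 else 0) :=
      key (fun x => x.1 ≤ i ∧ x.2 ≤ i)
    have k2 : (∑ x ∈ F, (if i ≤ x.1 ∧ i ≤ x.2 then r x else 0))
        = (if i ≤ 1 ∧ i ≤ 1 then 3 - (L : ℤ) else 0)
          + (if i ≤ 1 ∧ i ≤ n then 2 * (n : ℤ) - 1 - (L : ℤ) else 0)
          + 2 * (((Finset.Icc (n + 1) L).filter (fun j => i ≤ 1 ∧ i ≤ j)).card : ℤ)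
          + 2 * (((Finset.Icc 2 (n - 1)).filter (fun t => i ≤ t ∧ i ≤ t)).card : ℤ)
          + (if (i ≤ n ∧ i ≤ n) ∧ 2 ≤ n then (L : ℤ) - 2 * (n : ℤ) + 3 else 0) :=
      key (fun x => i ≤ x.1 ∧ i ≤ x.2)
    rw [e1, e2, k1, k2]
    have c1 : ((Finset.Icc (n + 1) L).filter (fun j => (1 : ℕ) ≤ i ∧ j ≤ i)).card = 0 := by
      rw [Finset.card_eq_zero, Finset.filter_eq_empty_iff]
      intro j hj
      rw [Finset.mem_Icc] at hj
      omega
    rw [c1]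
    rcases Nat.lt_or_ge i n with hilt | hige
    · -- i < n
      have c2 : ((Finset.Icc 2 (n - 1)).filter (fun t => t ≤ i ∧ t ≤ i)).card
          = i + 1 - 2 := by
        have hh : (Finset.Icc 2 (n - 1)).filter (fun t => t ≤ i ∧ t ≤ i)
            = Finset.Icc 2 i := by
          ext t
          simp only [Finset.mem_filter, Finset.mem_Icc]
          omega
        rw [hh, Nat.card_Icc]
      rcases Nat.lt_or_ge i 2 with hi1' | hi2'
      · -- i = 1
        have c3 : ((Finset.Icc (n + 1) L).filter (fun j => i ≤ 1 ∧ i ≤ j)).card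
            = L + 1 - (n + 1) := by
          rw [Finset.filter_true_of_mem, Nat.card_Icc]
          intro j hj
          rw [Finset.mem_Icc] at hj
          omega
        have c4 : ((Finset.Icc 2 (n - 1)).filter (fun t => i ≤ t ∧ i ≤ t)).card
            = n - 1 + 1 - 2 := by
          rw [Finset.filter_true_of_mem, Nat.card_Icc]
          intro t ht
          rw [Finset.mem_Icc] at ht
          omega
        rw [c2, c3, c4]
        rcases hc0 with hcv | hcv <;> split_ifs <;> omega
      · -- 2 ≤ i < n
        have c3 : ((Finset.Icc (n + 1) L).filter (fun j => i ≤ 1 ∧ i ≤ j)).card = 0 := by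
          rw [Finset.card_eq_zero, Finset.filter_eq_empty_iff]
          intro j hj
          rw [Finset.mem_Icc] at hj
          omega
        have c4 : ((Finset.Icc 2 (n - 1)).filter (fun t => i ≤ t ∧ i ≤ t)).card
            = n - 1 + 1 - i := by
          have hh : (Finset.Icc 2 (n - 1)).filter (fun t => i ≤ t ∧ i ≤ t)
              = Finset.Icc i (n - 1) := by
            ext t
            simp only [Finset.mem_filter, Finset.mem_Icc]
            omega
          rw [hh, Nat.card_Icc]
        rw [c2, c3, c4]
        split_ifs <;> omega
    · -- i = n
      have hieq : i = n := le_antisymm hi2 hige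
      subst hieq
      rcases Nat.lt_or_ge i 2 with hn2 | hn2
      · -- n = 1
        have hIccE : Finset.Icc 2 (i - 1) = ∅ := Finset.Icc_eq_empty (by omega)
        have c2 : ((Finset.Icc 2 (i - 1)).filter (fun t => t ≤ i ∧ t ≤ i)).card = 0 := by
          rw [hIccE, Finset.filter_empty, Finset.card_empty]
        have c4 : ((Finset.Icc 2 (i - 1)).filter (fun t => i ≤ t ∧ i ≤ t)).card = 0 := by
          rw [hIccE, Finset.filter_empty, Finset.card_empty]
        have c3 : ((Finset.Icc (i + 1) L).filter (fun j => i ≤ 1 ∧ i ≤ j)).card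
            = L + 1 - (i + 1) := by
          rw [Finset.filter_true_of_mem, Nat.card_Icc]
          intro j hj
          rw [Finset.mem_Icc] at hj
          omega
        rw [c2, c3, c4]
        rcases hc0 with hcv | hcv <;> split_ifs <;> omega
      · -- i = n ≥ 2
        have c2 : ((Finset.Icc 2 (i - 1)).filter (fun t => t ≤ i ∧ t ≤ i)).card
            = i - 1 + 1 - 2 := by
          rw [Finset.filter_true_of_mem, Nat.card_Icc]
          intro t ht
          rw [Finset.mem_Icc] at ht
          omega
        have c3 : ((Finset.Icc (i + 1) L).filter (fun j => i ≤ 1 ∧ i ≤ j)).card = 0 := by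
          rw [Finset.card_eq_zero, Finset.filter_eq_empty_iff]
          intro j hj
          rw [Finset.mem_Icc] at hj
          omega
        have c4 : ((Finset.Icc 2 (i - 1)).filter (fun t => i ≤ t ∧ i ≤ t)).card = 0 := by
          rw [Finset.card_eq_zero, Finset.filter_eq_empty_iff]
          intro t ht
          rw [Finset.mem_Icc] at ht
          omega
        rw [c2, c3, c4]
        split_ifs <;> omega
  · -- condition (c)
    intro i' hcor
    obtain ⟨hI1, hI2, hI3⟩ := hcor
    have hIe1 := hlami i' hI1 (by omega)
    have hIe2 := hlami (i' + 1) (by omega) hI2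
    have hik : i' ≤ k := by
      by_contra hh
      push_neg at hh
      have h0 := hzero i' hh
      omega
    have hknu : i' + nu (i' + 1) = k := by
      rcases Nat.lt_or_ge i' k with h | h
      · exact hcornbal i' hI1 (by omega) (by omega)
      · have h0 := hzero (i' + 1) (by omega)
        omega
    have hm1 : n ≤ lam (i' + 1) + i' := by omega
    have hm2 : lam (i' + 1) + i' ≤ L := by omega
    have hmL : lam (i' + 1) + i' + i' = L := by omega
    have e1 : (∑ᶠ (q : ↥(shiftCells n lam)),
          if (q : ℕ × ℕ).1 ≤ i' ∧ (q : ℕ × ℕ).2 ≤ lam (i' + 1) + i' then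
            r (q : ℕ × ℕ) else 0)
        = ∑ x ∈ F, (if x.1 ≤ i' ∧ x.2 ≤ lam (i' + 1) + i' then r x else 0) :=
      hsum (fun x => if x.1 ≤ i' ∧ x.2 ≤ lam (i' + 1) + i' then r x else 0)
    have k1 : (∑ x ∈ F, (if x.1 ≤ i' ∧ x.2 ≤ lam (i' + 1) + i' then r x else 0))
        = (if (1 : ℕ) ≤ i' ∧ (1 : ℕ) ≤ lam (i' + 1) + i' then 3 - (L : ℤ) else 0)
          + (if (1 : ℕ) ≤ i' ∧ n ≤ lam (i' + 1) + i' then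
              2 * (n : ℤ) - 1 - (L : ℤ) else 0)
          + 2 * (((Finset.Icc (n + 1) L).filter
              (fun j => (1 : ℕ) ≤ i' ∧ j ≤ lam (i' + 1) + i')).card : ℤ)
          + 2 * (((Finset.Icc 2 (n - 1)).filter
              (fun t => t ≤ i' ∧ t ≤ lam (i' + 1) + i')).card : ℤ)
          + (if (n ≤ i' ∧ n ≤ lam (i' + 1) + i') ∧ 2 ≤ n then
              (L : ℤ) - 2 * (n : ℤ) + 3 else 0) :=
      key (fun x => x.1 ≤ i' ∧ x.2 ≤ lam (i' + 1) + i')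
    rw [e1, k1]
    have c1 : ((Finset.Icc (n + 1) L).filter
        (fun j => (1 : ℕ) ≤ i' ∧ j ≤ lam (i' + 1) + i')).card
        = lam (i' + 1) + i' + 1 - (n + 1) := by
      have hh : (Finset.Icc (n + 1) L).filter
          (fun j => (1 : ℕ) ≤ i' ∧ j ≤ lam (i' + 1) + i')
          = Finset.Icc (n + 1) (lam (i' + 1) + i') := by
        ext j
        simp only [Finset.mem_filter, Finset.mem_Icc]
        omega
      rw [hh, Nat.card_Icc]
    have c2 : ((Finset.Icc 2 (n - 1)).filter
        (fun t => t ≤ i' ∧ t ≤ lam (i' + 1) + i')).card = i' + 1 - 2 := by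
      have hh : (Finset.Icc 2 (n - 1)).filter
          (fun t => t ≤ i' ∧ t ≤ lam (i' + 1) + i')
          = Finset.Icc 2 i' := by
        ext t
        simp only [Finset.mem_filter, Finset.mem_Icc]
        omega
      rw [hh, Nat.card_Icc]
    rw [c1, c2]
    split_ifs <;> omega

end CDEPaper
end
end

section
/- Let 0 ≤ k < n and let ν be a (not necessarily strict) partition which, as a straight shape, is balanced with height and width both equal to k. Set λ := δ_n + ν. Then the distributive lattice [∅, λ]_shift = J(P_λ^shift) is tCDE, i.e. E(μ; ddeg) = (n + 1 + k)/4 for every toggle-symmetric distribution μ on J(P_λ^shift); in particular its edge density E(uni; ddeg) equals (n + 1 + k)/4. -/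
open scoped Classical

noncomputable section

namespace CDEPaper

/-!
For weights `a` on a finite poset `P`, the statistic `Σ_q (a q · T⁺_q + (1 - a q) · T⁻_q)`
on `J(P)` has the same expectation as `Σ_q T⁻_q = ddeg` under every toggle-symmetric
distribution. So it suffices to choose weights making this statistic constant on
`J(P_λ^shift)`: its value at the empty ideal is then `a (1,1) = (λ 1 + 1)/4`, and `λ 1 = n + k`.

Adding an addable box `p` changes the toggle indicators only at `p` and at the boxes covering or
covered by `p`, i.e. its east, south, north and west neighbours. With `shiftedWeight`, the east
and north neighbours together contribute `(λ 1 + 1 - i - j)/2` (and so do the south and west ones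
when `p = (i, j)` is off the diagonal), which exactly cancels the change `1 - 2 a p` at `p`. When
only one neighbour of such a pair exists, the extra box blocking it sits at an outward corner,
and balancedness puts `p` on the anti-diagonal where `(λ 1 + 1 - i - j)/2 = 0`.
-/

section OrderIdeal

variable {α : Type*} [PartialOrder α]

theorem isLowerSet_union_singleton_iff {I : Set α} (hI : IsLowerSet I) {p : α} :
    IsLowerSet (I ∪ {p}) ↔ ∀ s < p, s ∈ I := by
  refine ⟨fun h s hs => (h hs.le (Or.inr rfl)).resolve_right hs.ne, ?_⟩
  rintro h a b hba (ha | rfl)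
  · exact Or.inl (hI hba ha)
  · rcases hba.lt_or_eq with hlt | rfl
    exacts [Or.inl (h _ hlt), Or.inr rfl]

theorem isLowerSet_diff_singleton_iff {I : Set α} (hI : IsLowerSet I) {p : α} :
    IsLowerSet (I \ {p}) ↔ ∀ s, p < s → s ∉ I := by
  refine ⟨fun h s hs hsI => (h hs.le ⟨hsI, hs.ne'⟩).2 rfl,
    fun h => hI.erase fun b hb hpb => ?_⟩
  by_contra hne
  exact h b (lt_of_le_of_ne hpb (Ne.symm hne)) hb

theorem Tplus_of_mem {q : α} {I : OIdeal α} (hq : q ∈ I.1) : Tplus q I = 0 :=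
  if_neg fun h => h.1 hq

theorem Tminus_of_notMem {q : α} {I : OIdeal α} (hq : q ∉ I.1) : Tminus q I = 0 :=
  if_neg fun h => hq h.1

variable [Finite α]

theorem forall_lt_mem_iff_forall_covBy_mem {I : Set α} (hI : IsLowerSet I) {p : α} :
    (∀ s < p, s ∈ I) ↔ ∀ s, s ⋖ p → s ∈ I := by
  refine ⟨fun h s hs => h s hs.lt, fun h s hs => ?_⟩
  obtain ⟨t, hst, htp⟩ := exists_le_covBy_of_lt hs
  exact hI hst (h t htp)

theorem forall_lt_notMem_iff_forall_covBy_notMem {I : Set α} (hI : IsLowerSet I) {p : α} :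
    (∀ s, p < s → s ∉ I) ↔ ∀ s, p ⋖ s → s ∉ I := by
  refine ⟨fun h s hs => h s hs.lt, fun h s hs hsI => ?_⟩
  obtain ⟨t, hpt, hts⟩ := exists_covBy_le_of_lt hs
  exact h t hpt (hI hts hsI)

theorem Tplus_eq_ite (p : α) (I : OIdeal α) :
    Tplus p I = if p ∉ I.1 ∧ ∀ s, s ⋖ p → s ∈ I.1 then 1 else 0 := by
  simp only [Tplus, isLowerSet_union_singleton_iff I.2, forall_lt_mem_iff_forall_covBy_mem I.2]

theorem Tminus_eq_ite (p : α) (I : OIdeal α) :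
    Tminus p I = if p ∈ I.1 ∧ ∀ s, p ⋖ s → s ∉ I.1 then 1 else 0 := by
  unfold Tminus
  congr 1
  exact propext (and_congr_right fun _ => (isLowerSet_diff_singleton_iff I.2).trans
    (forall_lt_notMem_iff_forall_covBy_notMem I.2))

theorem OIdeal.covBy_iff {I J : OIdeal α} : J ⋖ I ↔ ∃ q ∈ I.1, I.1 \ {q} = J.1 := by
  refine ⟨fun hJI => ?_, fun ⟨q, hq, hJ⟩ =>
    CovBy.of_image (OrderEmbedding.subtype _)
      (show J.1 ⋖ I.1 from hJ ▸ Set.sdiff_singleton_covBy hq)⟩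
  have hne : (I.1 \ J.1).Nonempty := Set.sdiff_nonempty.2 fun h => hJI.lt.not_ge h
  obtain ⟨m, ⟨hmI, hmJ⟩, hmax⟩ := (Set.toFinite _).exists_maximal hne
  have hlow : IsLowerSet (I.1 \ {m}) := (isLowerSet_diff_singleton_iff I.2).2
    fun s hms hsI => hms.not_ge (hmax ⟨hsI, fun hsJ => hmJ (J.2 hms.le hsJ)⟩ hms.le)
  have hJK : J ≤ ⟨I.1 \ {m}, hlow⟩ := fun s hs => ⟨hJI.le hs, fun h => hmJ (h ▸ hs)⟩
  refine ⟨m, hmI, ?_⟩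
  rcases hJI.eq_or_eq hJK (fun s hs => hs.1) with h | h
  · exact congrArg Subtype.val h
  · exact absurd (congrArg Subtype.val h ▸ hmI) fun h' => h'.2 rfl

def OIdeal.removableEquivCovBy (I : OIdeal α) :
    {q : α // q ∈ I.1 ∧ IsLowerSet (I.1 \ {q})} ≃ {J : OIdeal α // J ⋖ I} :=
  Equiv.ofBijective
    (fun q => ⟨⟨I.1 \ {q.1}, q.2.2⟩, OIdeal.covBy_iff.2 ⟨q.1, q.2.1, rfl⟩⟩) <| by
    refine ⟨fun q q' h => Subtype.ext ?_, fun J => ?_⟩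
    · have h' : I.1 \ {q.1} = I.1 \ {q'.1} := congrArg (fun J => J.1.1) h
      by_contra hne
      have : q.1 ∈ I.1 \ {q'.1} := ⟨q.2.1, hne⟩
      exact (h' ▸ this).2 rfl
    · obtain ⟨q, hq, hJ⟩ := OIdeal.covBy_iff.1 J.2
      exact ⟨⟨q, hq, hJ ▸ J.1.2⟩, Subtype.ext (Subtype.ext hJ)⟩

theorem ddeg_eq_finsum_Tminus (I : OIdeal α) : ddeg I = ∑ᶠ q, Tminus q I := by
  have := Fintype.ofFinite α
  rw [ddeg, ← Nat.card_congr I.removableEquivCovBy, Nat.card_eq_fintype_card,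
    Fintype.card_subtype, finsum_eq_sum_of_fintype, Finset.natCast_card_filter]
  rfl

end OrderIdeal

section Uniform

theorem isProbDist_uni {α : Type*} [Finite α] [Nonempty α] : IsProbDist (uni α) := by
  have := Fintype.ofFinite α
  refine ⟨fun _ => by unfold uni; positivity, ?_⟩
  unfold uni
  rw [finsum_eq_sum_of_fintype, Finset.sum_const, Finset.card_univ, nsmul_eq_mul,
    Nat.card_eq_fintype_card, mul_inv_cancel₀ (Nat.cast_ne_zero.2 Fintype.card_ne_zero)]

variable {α : Type*} [PartialOrder α]

def OIdeal.addableEquivRemovable (p : α) :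
    {I : OIdeal α // p ∉ I.1 ∧ IsLowerSet (I.1 ∪ {p})} ≃
      {I : OIdeal α // p ∈ I.1 ∧ IsLowerSet (I.1 \ {p})} where
  toFun I := ⟨⟨I.1.1 ∪ {p}, I.2.2⟩, Or.inr rfl, by
    rw [Set.union_sdiff_cancel_right (by simpa using I.2.1)]; exact I.1.2⟩
  invFun I := ⟨⟨I.1.1 \ {p}, I.2.2⟩, fun h => h.2 rfl, by
    rw [Set.sdiff_union_of_subset (Set.singleton_subset_iff.2 I.2.1)]; exact I.1.2⟩
  left_inv I := Subtype.ext <| Subtype.ext <|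
    Set.union_sdiff_cancel_right (by simpa using I.2.1)
  right_inv I := Subtype.ext <| Subtype.ext <|
    Set.sdiff_union_of_subset (Set.singleton_subset_iff.2 I.2.1)

theorem toggleSymmetric_uni [Finite α] : ToggleSymmetric (uni (OIdeal α)) := by
  have := Fintype.ofFinite (OIdeal α)
  intro p
  unfold expect uni
  rw [finsum_eq_sum_of_fintype, finsum_eq_sum_of_fintype, ← Finset.mul_sum, ← Finset.mul_sum]
  simp only [Tplus, Tminus, Finset.sum_boole, ← Fintype.card_subtype,
    Fintype.card_congr (OIdeal.addableEquivRemovable p)]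

end Uniform

section ToggleStat

variable {α : Type*} [PartialOrder α]

def toggleStat (a : α → ℝ) (I : OIdeal α) : ℝ :=
  ∑ᶠ q, (a q * Tplus q I + (1 - a q) * Tminus q I)

theorem toggleStat_empty {a : α → ℝ} {b : α} (hb : ∀ q, b ≤ q) :
    toggleStat a ⟨∅, isLowerSet_empty⟩ = a b := by
  rw [toggleStat, finsum_eq_single _ b]
  · rw [Tminus_of_notMem (Set.notMem_empty b), Tplus, if_pos]
    · ring
    refine ⟨Set.notMem_empty b, (isLowerSet_union_singleton_iff isLowerSet_empty).2 ?_⟩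
    exact fun s hs => absurd (hb s) hs.not_ge
  · intro q hq
    rw [Tminus_of_notMem (Set.notMem_empty q), Tplus, if_neg]
    · ring
    rintro ⟨-, h⟩
    exact (isLowerSet_union_singleton_iff isLowerSet_empty).1 h b
      (lt_of_le_of_ne (hb q) (Ne.symm hq))

variable [Finite α]

theorem expect_ddeg_eq_of_toggleStat_eq {a : α → ℝ} {c : ℝ} (hc : ∀ I, toggleStat a I = c)
    {μ : OIdeal α → ℝ} (hμ : IsProbDist μ) (hsymm : ToggleSymmetric μ) :
    expect μ ddeg = c := by
  have := Fintype.ofFinite α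
  have := Fintype.ofFinite (OIdeal α)
  have hsymm' (q : α) : ∑ I, μ I * Tplus q I = ∑ I, μ I * Tminus q I := by
    simpa only [expect, finsum_eq_sum_of_fintype] using hsymm q
  have hμ1 : ∑ I, μ I = 1 := by simpa only [finsum_eq_sum_of_fintype] using hμ.2
  calc expect μ ddeg = ∑ q, ∑ I, μ I * Tminus q I := by
        simp only [expect, ddeg_eq_finsum_Tminus, finsum_eq_sum_of_fintype, Finset.mul_sum]
        exact Finset.sum_comm
    _ = ∑ q, (a q * ∑ I, μ I * Tplus q I + (1 - a q) * ∑ I, μ I * Tminus q I) :=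
        Finset.sum_congr rfl fun q _ => by rw [hsymm']; ring
    _ = ∑ I, μ I * toggleStat a I := by
        simp only [toggleStat, finsum_eq_sum_of_fintype, Finset.mul_sum, ← Finset.sum_add_distrib]
        rw [Finset.sum_comm]
        refine Finset.sum_congr rfl fun _ _ => Finset.sum_congr rfl fun _ _ => by ring
    _ = c := by simp only [hc, ← Finset.sum_mul, hμ1, one_mul]

theorem OIdeal.apply_eq_apply_empty_of_insert {β : Type*} (F : OIdeal α → β)
    (hF : ∀ I p, p ∉ I.1 → ∀ hl : IsLowerSet (I.1 ∪ {p}), F ⟨I.1 ∪ {p}, hl⟩ = F I)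
    (I : OIdeal α) : F I = F ⟨∅, isLowerSet_empty⟩ := by
  induction I using WellFoundedLT.induction with
  | ind I ih =>
    rcases I.1.eq_empty_or_nonempty with hI | hI
    · exact congrArg F (Subtype.ext hI)
    obtain ⟨q, hqI, hmax⟩ := (Set.toFinite _).exists_maximal hI
    have hlow : IsLowerSet (I.1 \ {q}) := (isLowerSet_diff_singleton_iff I.2).2
      fun s hqs hsI => hqs.not_ge (hmax hsI hqs.le)
    have hins : (I.1 \ {q}) ∪ {q} = I.1 :=
      Set.sdiff_union_of_subset (Set.singleton_subset_iff.2 hqI)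
    have hne : (⟨I.1 \ {q}, hlow⟩ : OIdeal α) ≠ I := fun h =>
      ((Set.ext_iff.1 (congrArg Subtype.val h) q).2 hqI).2 rfl
    calc F I = F ⟨(I.1 \ {q}) ∪ {q}, by rw [hins]; exact I.2⟩ :=
          congrArg F (Subtype.ext hins.symm)
      _ = F ⟨I.1 \ {q}, hlow⟩ := hF ⟨I.1 \ {q}, hlow⟩ q (fun h => h.2 rfl) _
      _ = _ := ih _ (lt_of_le_of_ne (fun s hs => hs.1) hne)

theorem Tminus_insert_self {I : OIdeal α} {p : α} (hp : p ∉ I.1)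
    (hl : IsLowerSet (I.1 ∪ {p})) : Tminus p ⟨I.1 ∪ {p}, hl⟩ = 1 := by
  rw [Tminus_eq_ite]
  refine if_pos ⟨Or.inr rfl, fun s hps hs => ?_⟩
  exact ((Set.mem_union _ _ _).1 hs).elim (fun hs => hp (I.2 hps.le hs)) hps.lt.ne'

theorem Tplus_insert_of_ne_of_not_covBy {I : OIdeal α} {p q : α} (hl : IsLowerSet (I.1 ∪ {p}))
    (hqp : q ≠ p) (hpq : ¬p ⋖ q) : Tplus q ⟨I.1 ∪ {p}, hl⟩ = Tplus q I := by
  simp only [Tplus_eq_ite, Set.mem_union, Set.mem_singleton_iff, hqp, or_false]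
  congr 1
  exact propext (and_congr_right fun _ => forall_congr' fun s => imp_congr_right fun hs =>
    or_iff_left (by rintro rfl; exact hpq hs))

theorem Tminus_insert_of_ne_of_not_covBy {I : OIdeal α} {p q : α} (hl : IsLowerSet (I.1 ∪ {p}))
    (hqp : q ≠ p) (hqp' : ¬q ⋖ p) : Tminus q ⟨I.1 ∪ {p}, hl⟩ = Tminus q I := by
  simp only [Tminus_eq_ite, Set.mem_union, Set.mem_singleton_iff, hqp, or_false]
  congr 1
  exact propext (and_congr_right fun _ => forall_congr' fun s => imp_congr_right fun hs =>
    not_congr (or_iff_left (by rintro rfl; exact hqp' hs)))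

theorem toggleSummand_insert_sub (a : α → ℝ) {I : OIdeal α} {p : α} (hp : p ∉ I.1)
    (hl : IsLowerSet (I.1 ∪ {p})) (q : α) :
    a q * Tplus q ⟨I.1 ∪ {p}, hl⟩ + (1 - a q) * Tminus q ⟨I.1 ∪ {p}, hl⟩
        - (a q * Tplus q I + (1 - a q) * Tminus q I) =
      (if q = p then 1 - 2 * a p else 0)
        + (if p ⋖ q then a q * Tplus q ⟨I.1 ∪ {p}, hl⟩ else 0)
        - (if q ⋖ p then (1 - a q) * Tminus q I else 0) := by
  have hpI' : p ∈ I.1 ∪ {p} := Or.inr rfl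
  by_cases hqp : q = p
  · subst hqp
    rw [Tplus_of_mem (I := ⟨_, hl⟩) hpI', Tminus_insert_self hp hl, show Tplus q I = 1 from
      if_pos ⟨hp, hl⟩, Tminus_of_notMem hp, if_pos rfl, if_neg (covBy_irrefl (a := q)),
      if_neg (covBy_irrefl (a := q))]
    ring
  by_cases hpq : p ⋖ q
  · have hTplus : Tplus q I = 0 := by
      rw [Tplus_eq_ite, if_neg]
      exact fun h => hp (h.2 p hpq)
    rw [hTplus, Tminus_insert_of_ne_of_not_covBy hl hqp fun h => h.lt.not_gt hpq.lt, if_neg hqp,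
      if_pos hpq, if_neg fun h => h.lt.not_gt hpq.lt]
    ring
  by_cases hqp' : q ⋖ p
  · have hTminus : Tminus q ⟨I.1 ∪ {p}, hl⟩ = 0 := by
      rw [Tminus_eq_ite, if_neg]
      exact fun h => h.2 p hqp' hpI'
    rw [hTminus, Tplus_insert_of_ne_of_not_covBy hl hqp hpq, if_neg hqp, if_neg hpq, if_pos hqp']
    ring
  rw [Tplus_insert_of_ne_of_not_covBy hl hqp hpq, Tminus_insert_of_ne_of_not_covBy hl hqp hqp',
    if_neg hqp, if_neg hpq, if_neg hqp']
  ring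

theorem toggleStat_insert_sub (a : α → ℝ) {I : OIdeal α} {p : α} (hp : p ∉ I.1)
    (hl : IsLowerSet (I.1 ∪ {p})) :
    toggleStat a ⟨I.1 ∪ {p}, hl⟩ - toggleStat a I =
      1 - 2 * a p + ∑ᶠ q, (if p ⋖ q then a q * Tplus q ⟨I.1 ∪ {p}, hl⟩ else 0)
        - ∑ᶠ q, (if q ⋖ p then (1 - a q) * Tminus q I else 0) := by
  have := Fintype.ofFinite α
  simp only [toggleStat, finsum_eq_sum_of_fintype]
  rw [← Finset.sum_sub_distrib,
    Finset.sum_congr rfl fun q _ => toggleSummand_insert_sub a hp hl q, Finset.sum_sub_distrib,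
    Finset.sum_add_distrib, Finset.sum_ite_eq']
  simp only [Finset.mem_univ, if_true]

theorem Tplus_insert_of_covBy {I : OIdeal α} {p e : α} (hp : p ∉ I.1)
    (hl : IsLowerSet (I.1 ∪ {p})) (hpe : p ⋖ e) :
    Tplus e ⟨I.1 ∪ {p}, hl⟩ = if ∀ s, s ⋖ e → s ≠ p → s ∈ I.1 then 1 else 0 := by
  have heI : e ∉ I.1 ∪ {p} := fun h =>
    ((Set.mem_union _ _ _).1 h).elim (fun h => hp (I.2 hpe.le h)) hpe.ne'
  rw [Tplus_eq_ite]
  congr 1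
  exact propext ⟨fun H s hs hsp => (H.2 s hs).resolve_right hsp,
    fun H => ⟨heI, fun s hs => (em (s = p)).elim Or.inr fun hsp => Or.inl (H s hs hsp)⟩⟩

theorem Tminus_of_covBy_of_insert {I : OIdeal α} {p d : α} (hp : p ∉ I.1)
    (hl : IsLowerSet (I.1 ∪ {p})) (hdp : d ⋖ p) :
    Tminus d I = if ∀ s, d ⋖ s → s ≠ p → s ∉ I.1 then 1 else 0 := by
  rw [Tminus_eq_ite]
  congr 1
  exact propext ⟨fun H s hs _ => H.2 s hs, fun H =>
    ⟨(isLowerSet_union_singleton_iff I.2).1 hl d hdp.lt,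
      fun s hs => (em (s = p)).elim (fun h => h ▸ hp) (H s hs)⟩⟩

end ToggleStat

section FinsumSubtype

variable {β : Type*} [DecidableEq β] {S : Set β}

theorem finsum_ite_val_eq (f : S → ℝ) (x : β) :
    ∑ᶠ q : S, (if q.1 = x then f q else 0) = if h : x ∈ S then f ⟨x, h⟩ else 0 := by
  split_ifs with h
  · rw [finsum_eq_single _ ⟨x, h⟩ fun q hq => if_neg fun h' => hq (Subtype.ext h'), if_pos rfl]
  · exact finsum_eq_zero_of_forall_eq_zero fun q => if_neg fun (h' : q.1 = x) => h (h' ▸ q.2)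

theorem finsum_ite_val_eq_or [Finite S] (f : S → ℝ) {x y : β} (hxy : x ≠ y) :
    ∑ᶠ q : S, (if q.1 = x ∨ q.1 = y then f q else 0) =
      (if h : x ∈ S then f ⟨x, h⟩ else 0) + (if h : y ∈ S then f ⟨y, h⟩ else 0) := by
  rw [← finsum_ite_val_eq, ← finsum_ite_val_eq, ← finsum_add_distrib (Set.toFinite _)
    (Set.toFinite _)]
  refine finsum_congr fun q => ?_
  by_cases hx : q.1 = x
  · rw [if_pos (Or.inl hx), if_pos hx, if_neg fun hy => hxy (hx.symm.trans hy), add_zero]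
  · by_cases hy : q.1 = y <;> simp [hx, hy, hxy.symm]

end FinsumSubtype

section ShiftedShape

/-- `λ = δ_l + ν` for a partition `ν`, with every outward corner `(a, λ (a + 1) + a)` of the
shifted diagram on the anti-diagonal `i + j = λ 1`. -/
structure IsBalancedShifted (l : ℕ) (lam : ℕ → ℕ) : Prop where
  one_le_length : 1 ≤ l
  strictAntiOn : StrictAntiOn lam (Set.Icc 1 l)
  last_eq_one : lam l = 1
  corner : ∀ a, IsCorner l lam a → lam (a + 1) + 2 * a = lam 1

variable {l : ℕ} {lam : ℕ → ℕ}

theorem mem_shiftCells {i j : ℕ} :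
    (i, j) ∈ shiftCells l lam ↔ 1 ≤ i ∧ i ≤ l ∧ i ≤ j ∧ j < lam i + i :=
  Iff.rfl

theorem apply_add_le_apply_add_of_strictAntiOn (h : StrictAntiOn lam (Set.Icc 1 l)) {a b : ℕ}
    (ha : 1 ≤ a) (hab : a ≤ b) (hb : b ≤ l) : lam b + b ≤ lam a + a := by
  induction b, hab using Nat.le_induction with
  | base => exact le_rfl
  | succ b hab ih =>
    have := h ⟨by omega, by omega⟩ ⟨by omega, hb⟩ (Nat.lt_succ_self b)
    have := ih (by omega)
    omega

theorem shiftCells_covBy_iff (h : StrictAntiOn lam (Set.Icc 1 l))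
    {q r : ↥(shiftCells l lam)} :
    q ⋖ r ↔ r.1 = (q.1.1, q.1.2 + 1) ∨ r.1 = (q.1.1 + 1, q.1.2) := by
  obtain ⟨⟨i, j⟩, hq⟩ := q
  obtain ⟨⟨a, b⟩, hr⟩ := r
  rw [mem_shiftCells] at hq hr
  simp only [Prod.mk.injEq]
  constructor
  · intro hcov
    have hlt : i ≤ a ∧ j ≤ b ∧ i + j < a + b := by
      have := hcov.lt
      simp only [Subtype.mk_lt_mk, Prod.mk_lt_mk] at this
      omega
    have hrow : lam a + a ≤ lam i + i :=
      apply_add_le_apply_add_of_strictAntiOn h hq.1 hlt.1 hr.2.1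
    have hstep (c d : ℕ) (hs : (c, d) ∈ shiftCells l lam)
        (h1 : i ≤ c ∧ j ≤ d ∧ i + j < c + d) (h2 : c ≤ a ∧ d ≤ b) : c = a ∧ d = b := by
      by_contra hne
      refine hcov.2 (c := ⟨(c, d), hs⟩) ?_ ?_ <;>
        simp only [Subtype.mk_lt_mk, Prod.mk_lt_mk] <;> omega
    by_cases hcase : a = i ∨ j < b
    · have := hstep i (j + 1) (mem_shiftCells.2 ⟨hq.1, hq.2.1, by omega, by omega⟩)
        (by omega) (by omega)
      omega
    · have h' : lam (i + 1) + (i + 1) ≥ lam a + a :=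
        apply_add_le_apply_add_of_strictAntiOn h (by omega) (by omega) hr.2.1
      have := hstep (i + 1) j (mem_shiftCells.2 ⟨by omega, by omega, by omega, by omega⟩)
        (by omega) (by omega)
      omega
  · intro hab
    refine ⟨?_, fun s h1 h2 => ?_⟩
    · simp only [Subtype.mk_lt_mk, Prod.mk_lt_mk]
      omega
    · obtain ⟨⟨c, d⟩, hs⟩ := s
      simp only [Subtype.mk_lt_mk, Prod.mk_lt_mk] at h1 h2
      omega

theorem shiftCells_finite : (shiftCells l lam).Finite := by
  refine ((Set.finite_Iic l).biUnion fun i _ =>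
    (Set.finite_singleton i).prod (Set.finite_Iio (lam i + i))).subset ?_
  rintro ⟨i, j⟩ ⟨-, hil, -, hj⟩
  exact Set.mem_biUnion hil ⟨rfl, hj⟩

instance : Finite ↥(shiftCells l lam) := shiftCells_finite.to_subtype

theorem shiftCells_covBy_iff' (h : StrictAntiOn lam (Set.Icc 1 l))
    {q r : ↥(shiftCells l lam)} :
    q ⋖ r ↔ q.1 = (r.1.1, r.1.2 - 1) ∨ q.1 = (r.1.1 - 1, r.1.2) := by
  obtain ⟨⟨i, j⟩, hq⟩ := q
  obtain ⟨⟨a, b⟩, hr⟩ := r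
  rw [shiftCells_covBy_iff h]
  rw [mem_shiftCells] at hq hr
  simp only [Prod.mk.injEq]
  omega

variable (h : StrictAntiOn lam (Set.Icc 1 l)) {i j : ℕ} (hp : (i, j) ∈ shiftCells l lam)
include h

theorem finsum_upperCovers_shiftCells (f : ↥(shiftCells l lam) → ℝ) :
    ∑ᶠ q, (if ⟨(i, j), hp⟩ ⋖ q then f q else 0) =
      (if hE : (i, j + 1) ∈ shiftCells l lam then f ⟨_, hE⟩ else 0) +
        (if hS : (i + 1, j) ∈ shiftCells l lam then f ⟨_, hS⟩ else 0) := by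
  simp only [shiftCells_covBy_iff h]
  exact finsum_ite_val_eq_or (x := (i, j + 1)) (y := (i + 1, j)) f (by simp)

theorem finsum_lowerCovers_shiftCells (f : ↥(shiftCells l lam) → ℝ) :
    ∑ᶠ q, (if q ⋖ ⟨(i, j), hp⟩ then f q else 0) =
      (if hW : (i, j - 1) ∈ shiftCells l lam then f ⟨_, hW⟩ else 0) +
        (if hN : (i - 1, j) ∈ shiftCells l lam then f ⟨_, hN⟩ else 0) := by
  simp only [shiftCells_covBy_iff' h]
  rw [mem_shiftCells] at hp
  exact finsum_ite_val_eq_or (x := (i, j - 1)) (y := (i - 1, j)) f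
    (by simp only [ne_eq, Prod.mk.injEq]; omega)

variable {I : OIdeal ↥(shiftCells l lam)} (hpI : ⟨(i, j), hp⟩ ∉ I.1)
  (hl : IsLowerSet (I.1 ∪ {⟨(i, j), hp⟩}))
include hpI hl

theorem Tplus_insert_east (hE : (i, j + 1) ∈ shiftCells l lam) :
    Tplus ⟨(i, j + 1), hE⟩ ⟨I.1 ∪ {⟨(i, j), hp⟩}, hl⟩ =
      if ∀ hx : (i - 1, j + 1) ∈ shiftCells l lam, ⟨_, hx⟩ ∈ I.1 then 1 else 0 := by
  rw [Tplus_insert_of_covBy hpI hl ((shiftCells_covBy_iff h).2 (Or.inl rfl))]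
  congr 1
  refine propext ⟨fun H hx => H _ ((shiftCells_covBy_iff' h).2 (Or.inr rfl)) fun he => ?_,
    fun H s hs hsp => ?_⟩
  · have := congrArg (fun q => q.1.1) he
    rw [mem_shiftCells] at hx
    simp only at this
    omega
  · obtain ⟨⟨a, b⟩, hs'⟩ := s
    rw [shiftCells_covBy_iff' h] at hs
    simp only [Prod.mk.injEq] at hs
    rcases hs with ⟨rfl, hb⟩ | ⟨rfl, rfl⟩
    · exact (hsp (by simp only [Subtype.mk.injEq, Prod.mk.injEq, true_and]; omega)).elim
    · exact H hs'

theorem Tplus_insert_south (hS : (i + 1, j) ∈ shiftCells l lam) :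
    Tplus ⟨(i + 1, j), hS⟩ ⟨I.1 ∪ {⟨(i, j), hp⟩}, hl⟩ =
      if ∀ hy : (i + 1, j - 1) ∈ shiftCells l lam, ⟨_, hy⟩ ∈ I.1 then 1 else 0 := by
  rw [Tplus_insert_of_covBy hpI hl ((shiftCells_covBy_iff h).2 (Or.inr rfl))]
  congr 1
  refine propext ⟨fun H hy => H _ ((shiftCells_covBy_iff' h).2 (Or.inl rfl)) fun he => ?_,
    fun H s hs hsp => ?_⟩
  · have := congrArg (fun q => q.1.1) he
    simp only at this
    omega
  · obtain ⟨⟨a, b⟩, hs'⟩ := s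
    rw [shiftCells_covBy_iff' h] at hs
    simp only [Prod.mk.injEq] at hs
    rcases hs with ⟨rfl, rfl⟩ | ⟨ha, rfl⟩
    · exact H hs'
    · exact (hsp (by simp only [Subtype.mk.injEq, Prod.mk.injEq, and_true]; omega)).elim

theorem Tminus_north (hN : (i - 1, j) ∈ shiftCells l lam) :
    Tminus ⟨(i - 1, j), hN⟩ I =
      if ∀ hx : (i - 1, j + 1) ∈ shiftCells l lam, ⟨_, hx⟩ ∉ I.1 then 1 else 0 := by
  have hN' := mem_shiftCells.1 hN
  rw [Tminus_of_covBy_of_insert hpI hl ((shiftCells_covBy_iff' h).2 (Or.inr rfl))]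
  congr 1
  refine propext ⟨fun H hx => H _ ((shiftCells_covBy_iff h).2 (Or.inl rfl)) fun he => ?_,
    fun H s hs hsp => ?_⟩
  · have := congrArg (fun q => q.1.2) he
    simp only at this
    omega
  · obtain ⟨⟨a, b⟩, hs'⟩ := s
    rw [shiftCells_covBy_iff h] at hs
    simp only [Prod.mk.injEq] at hs
    rcases hs with ⟨rfl, rfl⟩ | ⟨ha, rfl⟩
    · exact H hs'
    · exact (hsp (by simp only [Subtype.mk.injEq, Prod.mk.injEq, and_true]; omega)).elim

theorem Tminus_west (hW : (i, j - 1) ∈ shiftCells l lam) :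
    Tminus ⟨(i, j - 1), hW⟩ I =
      if ∀ hy : (i + 1, j - 1) ∈ shiftCells l lam, ⟨_, hy⟩ ∉ I.1 then 1 else 0 := by
  have hW' := mem_shiftCells.1 hW
  rw [Tminus_of_covBy_of_insert hpI hl ((shiftCells_covBy_iff' h).2 (Or.inl rfl))]
  congr 1
  refine propext ⟨fun H hy => H _ ((shiftCells_covBy_iff h).2 (Or.inr rfl)) fun he => ?_,
    fun H s hs hsp => ?_⟩
  · have := congrArg (fun q => q.1.1) he
    simp only at this
    omega
  · obtain ⟨⟨a, b⟩, hs'⟩ := s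
    rw [shiftCells_covBy_iff h] at hs
    simp only [Prod.mk.injEq] at hs
    rcases hs with ⟨rfl, hb⟩ | ⟨rfl, rfl⟩
    · exact (hsp (by simp only [Subtype.mk.injEq, Prod.mk.injEq, true_and]; omega)).elim
    · exact H hs'

end ShiftedShape

section Corners

variable {l : ℕ} {lam : ℕ → ℕ} (hshape : IsBalancedShifted l lam) {i j : ℕ}
  (hp : (i, j) ∈ shiftCells l lam)
include hshape hp

theorem IsBalancedShifted.add_eq_of_north_corner (hE : (i, j + 1) ∉ shiftCells l lam)
    (hx : (i - 1, j + 1) ∈ shiftCells l lam) : i + j = lam 1 + 1 := by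
  rw [mem_shiftCells] at hp hE hx
  have hc := hshape.corner (i - 1)
    ⟨by omega, by omega, by rw [Nat.sub_add_cancel (by omega)]; omega⟩
  rw [Nat.sub_add_cancel (by omega)] at hc
  omega

theorem IsBalancedShifted.add_eq_of_south_corner (hS : (i + 1, j) ∉ shiftCells l lam)
    (hy : (i + 1, j - 1) ∈ shiftCells l lam) (hij : i + 1 < j) : i + j = lam 1 + 1 := by
  rw [mem_shiftCells] at hp hS hy
  have hc := hshape.corner i ⟨by omega, by omega, by omega⟩
  omega

theorem IsBalancedShifted.mem_diag_of_mem (hij : j = i + 1) :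
    (i + 1, i + 1) ∈ shiftCells l lam := by
  rw [mem_shiftCells] at hp ⊢
  have hil : i + 1 ≤ l := by
    by_contra hil
    have := hshape.last_eq_one
    rw [show i = l by omega] at hp
    omega
  have := hshape.strictAntiOn.antitoneOn ⟨by omega, hil⟩ ⟨hshape.one_le_length, le_rfl⟩ hil
  rw [hshape.last_eq_one] at this
  omega

end Corners

/-- Off the diagonal, `shiftedWeight m (i, j) = 1/2 + (m + 1 - i - j)/2`: the offset drops by
`1/2` at each step east or south and vanishes on the anti-diagonal `i + j = m + 1`, which passes
through the outward corners of a balanced shape. -/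
def shiftedWeight (m : ℕ) (c : ℕ × ℕ) : ℝ :=
  if c.1 = c.2 then ((m : ℝ) + 3 - 2 * c.1) / 4 else ((m : ℝ) + 2 - c.1 - c.2) / 2

theorem shiftedWeight_diag (m i : ℕ) : shiftedWeight m (i, i) = ((m : ℝ) + 3 - 2 * i) / 4 :=
  if_pos rfl

theorem shiftedWeight_of_ne (m : ℕ) {i j : ℕ} (hij : i ≠ j) :
    shiftedWeight m (i, j) = ((m : ℝ) + 2 - i - j) / 2 :=
  if_neg hij

section Balance

variable {l : ℕ} {lam : ℕ → ℕ} (hshape : IsBalancedShifted l lam) {i j : ℕ}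
  (hp : (i, j) ∈ shiftCells l lam) {I : OIdeal ↥(shiftCells l lam)}
  (hpI : ⟨(i, j), hp⟩ ∉ I.1) (hl : IsLowerSet (I.1 ∪ {⟨(i, j), hp⟩}))
include hshape hpI

theorem northEast_balance :
    (if hE : (i, j + 1) ∈ shiftCells l lam then
        shiftedWeight (lam 1) (i, j + 1) * Tplus ⟨_, hE⟩ ⟨I.1 ∪ {⟨(i, j), hp⟩}, hl⟩
      else 0) -
      (if hN : (i - 1, j) ∈ shiftCells l lam then
        (1 - shiftedWeight (lam 1) (i - 1, j)) * Tminus ⟨_, hN⟩ I else 0) =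
      ((lam 1 : ℝ) + 1 - i - j) / 2 := by
  have h := hshape.strictAntiOn
  have hp' := mem_shiftCells.1 hp
  have hwE : shiftedWeight (lam 1) (i, j + 1) = ((lam 1 : ℝ) + 1 - i - j) / 2 := by
    rw [shiftedWeight_of_ne _ (by omega)]
    push_cast
    ring
  rcases Nat.lt_or_ge 1 i with hi | hi
  · have hrow : lam i + i ≤ lam (i - 1) + (i - 1) :=
      apply_add_le_apply_add_of_strictAntiOn h (by omega) (by omega) hp'.2.1
    have hN : (i - 1, j) ∈ shiftCells l lam :=
      mem_shiftCells.2 ⟨by omega, by omega, by omega, by omega⟩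
    have hwN : 1 - shiftedWeight (lam 1) (i - 1, j) = -(((lam 1 : ℝ) + 1 - i - j) / 2) := by
      rw [shiftedWeight_of_ne _ (by omega)]
      push_cast [Nat.cast_sub (by omega : 1 ≤ i)]
      ring
    rw [dif_pos hN, Tminus_north h hp hpI hl hN, hwN]
    by_cases hE : (i, j + 1) ∈ shiftCells l lam
    · have hx : (i - 1, j + 1) ∈ shiftCells l lam := by
        rw [mem_shiftCells] at hE ⊢
        omega
      rw [dif_pos hE, Tplus_insert_east h hp hpI hl hE, hwE]
      by_cases hxI : ⟨(i - 1, j + 1), hx⟩ ∈ I.1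
      · rw [if_pos fun _ => hxI, if_neg fun H => H hx hxI]
        ring
      · rw [if_neg fun H => hxI (H hx), if_pos fun _ => hxI]
        ring
    · rw [dif_neg hE]
      by_cases hxI : ∀ hx : (i - 1, j + 1) ∈ shiftCells l lam, ⟨_, hx⟩ ∉ I.1
      · rw [if_pos hxI]
        ring
      · obtain ⟨hx, -⟩ := not_forall.1 hxI
        have hij : (i : ℝ) + j = lam 1 + 1 := by
          exact_mod_cast hshape.add_eq_of_north_corner hp hE hx
        rw [if_neg hxI]
        linarith
  · obtain rfl : i = 1 := by omega
    rw [dif_neg (show (1 - 1, j) ∉ shiftCells l lam by rw [mem_shiftCells]; omega)]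
    by_cases hE : (1, j + 1) ∈ shiftCells l lam
    · rw [dif_pos hE, Tplus_insert_east h hp hpI hl hE, if_pos fun hx => by
        rw [mem_shiftCells] at hx; omega, hwE]
      ring
    · rw [mem_shiftCells] at hE
      have hj : (j : ℝ) = lam 1 := by exact_mod_cast (by omega : j = lam 1)
      rw [dif_neg (by rw [mem_shiftCells]; omega), hj]
      ring

theorem southWest_balance :
    (if hS : (i + 1, j) ∈ shiftCells l lam then
        shiftedWeight (lam 1) (i + 1, j) * Tplus ⟨_, hS⟩ ⟨I.1 ∪ {⟨(i, j), hp⟩}, hl⟩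
      else 0) -
      (if hW : (i, j - 1) ∈ shiftCells l lam then
        (1 - shiftedWeight (lam 1) (i, j - 1)) * Tminus ⟨_, hW⟩ I else 0) =
      if i = j then 0 else ((lam 1 : ℝ) + 1 - i - j) / 2 := by
  have h := hshape.strictAntiOn
  have hp' := mem_shiftCells.1 hp
  rcases Nat.lt_trichotomy (i + 1) j with hij | rfl | hij
  · have hW : (i, j - 1) ∈ shiftCells l lam :=
      mem_shiftCells.2 ⟨by omega, by omega, by omega, by omega⟩
    have hwW : 1 - shiftedWeight (lam 1) (i, j - 1) = -(((lam 1 : ℝ) + 1 - i - j) / 2) := by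
      rw [shiftedWeight_of_ne _ (by omega)]
      push_cast [Nat.cast_sub (by omega : 1 ≤ j)]
      ring
    rw [dif_pos hW, Tminus_west h hp hpI hl hW, hwW, if_neg (show i ≠ j by omega)]
    by_cases hS : (i + 1, j) ∈ shiftCells l lam
    · have hy : (i + 1, j - 1) ∈ shiftCells l lam := by
        rw [mem_shiftCells] at hS ⊢
        omega
      have hwS : shiftedWeight (lam 1) (i + 1, j) = ((lam 1 : ℝ) + 1 - i - j) / 2 := by
        rw [shiftedWeight_of_ne _ (by omega)]
        push_cast
        ring
      rw [dif_pos hS, Tplus_insert_south h hp hpI hl hS, hwS]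
      by_cases hyI : ⟨(i + 1, j - 1), hy⟩ ∈ I.1
      · rw [if_pos fun _ => hyI, if_neg fun H => H hy hyI]
        ring
      · rw [if_neg fun H => hyI (H hy), if_pos fun _ => hyI]
        ring
    · rw [dif_neg hS]
      by_cases hyI : ∀ hy : (i + 1, j - 1) ∈ shiftCells l lam, ⟨_, hy⟩ ∉ I.1
      · rw [if_pos hyI]
        ring
      · obtain ⟨hy, -⟩ := not_forall.1 hyI
        have hij' : (i : ℝ) + j = lam 1 + 1 := by
          exact_mod_cast hshape.add_eq_of_south_corner hp hS hy hij
        rw [if_neg hyI]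
        linarith
  · have hS := hshape.mem_diag_of_mem hp rfl
    have hW : (i, i + 1 - 1) ∈ shiftCells l lam :=
      mem_shiftCells.2 ⟨by omega, by omega, by omega, by omega⟩
    rw [dif_pos hS, dif_pos hW, Tplus_insert_south h hp hpI hl hS, Tminus_west h hp hpI hl hW,
      if_pos fun hy => by rw [mem_shiftCells] at hy; omega,
      if_pos fun hy => by rw [mem_shiftCells] at hy; omega, if_neg (show i ≠ i + 1 by omega),
      add_tsub_cancel_right, shiftedWeight_diag, shiftedWeight_diag]
    push_cast
    ring
  · obtain rfl : i = j := by omega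
    rw [dif_neg (by rw [mem_shiftCells]; omega), dif_neg (by rw [mem_shiftCells]; omega),
      if_pos rfl]
    ring

theorem toggleStat_shiftedWeight_insert :
    toggleStat (fun q => shiftedWeight (lam 1) q.1) ⟨I.1 ∪ {⟨(i, j), hp⟩}, hl⟩ =
      toggleStat (fun q => shiftedWeight (lam 1) q.1) I := by
  have h := hshape.strictAntiOn
  have hdiff := toggleStat_insert_sub (fun q => shiftedWeight (lam 1) q.1) hpI hl
  rw [finsum_upperCovers_shiftCells h hp, finsum_lowerCovers_shiftCells h hp] at hdiff
  have hne := northEast_balance hshape hp hpI hl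
  have hsw := southWest_balance hshape hp hpI hl
  by_cases hij : i = j
  · subst hij
    rw [if_pos rfl] at hsw
    rw [shiftedWeight_diag] at hdiff
    linarith
  · rw [if_neg hij] at hsw
    rw [shiftedWeight_of_ne _ hij] at hdiff
    linarith

end Balance

theorem IsBalancedShifted.expect_ddeg {l : ℕ} {lam : ℕ → ℕ} (hshape : IsBalancedShifted l lam)
    {μ : OIdeal ↥(shiftCells l lam) → ℝ} (hμ : IsProbDist μ) (hsymm : ToggleSymmetric μ) :
    expect μ ddeg = ((lam 1 : ℝ) + 1) / 4 := by
  refine expect_ddeg_eq_of_toggleStat_eq (a := fun q => shiftedWeight (lam 1) q.1)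
    (fun I => ?_) hμ hsymm
  have h11 : (1, 1) ∈ shiftCells l lam := by
    have := hshape.strictAntiOn.antitoneOn ⟨le_rfl, hshape.one_le_length⟩
      ⟨hshape.one_le_length, le_rfl⟩ hshape.one_le_length
    rw [hshape.last_eq_one] at this
    exact mem_shiftCells.2 ⟨le_rfl, hshape.one_le_length, le_rfl, by omega⟩
  have hbot (q : ↥(shiftCells l lam)) : ⟨(1, 1), h11⟩ ≤ q := by
    obtain ⟨⟨a, b⟩, hq⟩ := q
    rw [mem_shiftCells] at hq
    exact Prod.mk_le_mk.2 ⟨hq.1, by omega⟩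
  rw [OIdeal.apply_eq_apply_empty_of_insert _ (fun I ⟨(i, j), hp⟩ hpI hl =>
      toggleStat_shiftedWeight_insert hshape hp hpI hl) I, toggleStat_empty hbot,
    shiftedWeight_diag]
  push_cast
  ring

theorem isBalancedShifted_staircase_add {n k : ℕ} (hkn : k < n) {nu : ℕ → ℕ}
    (hbal : BalancedSquare k nu) {lam : ℕ → ℕ}
    (hlam : ∀ i, 1 ≤ i → i ≤ n → lam i = (n + 1 - i) + nu i) :
    IsBalancedShifted n lam := by
  obtain ⟨hanti, -, hzero, hnu1, hcorner⟩ := hbal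
  refine ⟨by omega, fun a ⟨ha, han⟩ b ⟨hb, hbn⟩ hab => ?_, ?_,
    fun a ⟨ha, han, hgap⟩ => ?_⟩
  · have := antitoneOn_nat_Ici_of_succ_le hanti (Set.mem_Ici.2 ha) (Set.mem_Ici.2 hb) hab.le
    rw [hlam a ha han, hlam b hb hbn]
    omega
  · rw [hlam n (by omega) le_rfl, hzero n hkn]
    omega
  · rw [hlam (a + 1) (by omega) han, hlam a ha (by omega)] at hgap
    rw [hlam (a + 1) (by omega) han, hlam 1 le_rfl (by omega), hnu1]
    rcases Nat.lt_or_ge a k with hak | hak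
    · have := hcorner a ha (by omega) (by omega)
      omega
    · have h1 := hzero (a + 1) (by omega)
      have h2 : a ≤ k := by
        by_contra h
        have := hzero a (by omega)
        omega
      omega

theorem statement12_general (n k : ℕ) (hkn : k < n) (nu : ℕ → ℕ) (hbal : BalancedSquare k nu)
    (lam : ℕ → ℕ)
    (hlam : ∀ i, 1 ≤ i → i ≤ n → lam i = (n + 1 - i) + nu i) :
    (∀ μ : OIdeal ↥(shiftCells n lam) → ℝ, IsProbDist μ → ToggleSymmetric μ →
        expect μ ddeg = ((n : ℝ) + 1 + (k : ℝ)) / 4) ∧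
      expect (uni (OIdeal ↥(shiftCells n lam))) ddeg = ((n : ℝ) + 1 + (k : ℝ)) / 4 := by
  have hshape := isBalancedShifted_staircase_add hkn hbal hlam
  have hlam1 : ((lam 1 : ℕ) : ℝ) + 1 = n + 1 + k := by
    rw [hlam 1 le_rfl (by omega), hbal.2.2.2.1]
    push_cast [Nat.add_sub_cancel]
    ring
  have : Nonempty (OIdeal ↥(shiftCells n lam)) := ⟨⟨∅, isLowerSet_empty⟩⟩
  refine ⟨fun μ hμ hsymm => ?_, ?_⟩
  · rw [hshape.expect_ddeg hμ hsymm, hlam1]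
  · rw [hshape.expect_ddeg isProbDist_uni toggleSymmetric_uni, hlam1]

/-- Theorem `thm:shiftyounglatcde`(1).  Let `0 ≤ k < n` and let `ν` be a
(not necessarily strict) partition which, as a straight shape, is balanced with height and
width both equal to `k`.  Set `λ := δ_n + ν`.  Then the distributive lattice
`[∅, λ]_shift = J(P_λ^shift)` is tCDE: `E(μ; ddeg) = (n + 1 + k)/4` for every toggle-symmetric
probability distribution `μ`; in particular its edge density is `(n + 1 + k)/4`. -/
theorem statement12 (n k : ℕ) (hkn : k < n) (nu : ℕ → ℕ) (hbal : BalancedSquare k nu)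
    (lam : ℕ → ℕ)
    (hlam : ∀ i, 1 ≤ i → i ≤ n → lam i = (n + 1 - i) + nu i)
    (hlam0 : ∀ i, n < i → lam i = 0) :
    (∀ μ : OIdeal ↥(shiftCells n lam) → ℝ, IsProbDist μ → ToggleSymmetric μ →
        expect μ ddeg = ((n : ℝ) + 1 + (k : ℝ)) / 4) ∧
      expect (uni (OIdeal ↥(shiftCells n lam))) ddeg = ((n : ℝ) + 1 + (k : ℝ)) / 4 :=
  statement12_general n k hkn nu hbal lam hlam

end CDEPaper
end
end
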